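/- arXiv:2109.04586 — 8 statements merged into one kernel-verified Lean document; each statement's English description precedes it below -/
import Mathlib

section
/- For every real s ≥ 1/(2√2) and every square-summable sequence x = (x_n)_{n≥0} of real numbers, one has ‖A_s x‖₂ ≤ 4‖x‖₂, i.e. Σ_{n=0}^∞ (Σ_{j=0}^∞ x_j/(max(n,j)+s))² ≤ 16 Σ_{n=0}^∞ x_n². -/
/-!
By Abel summation, `1 / (max n j + s)` is a positive combination of the indicators of
`{n, j ≤ k}`, so the quadratic form of every finite section of `A_s` is a positive combination of
squares of partial sums. A Bellman-function induction proves a discrete Hardy inequality bounding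
this form by `4 ‖u‖²`. A positive semidefinite form `B ≤ 4` satisfies `B² ≤ 16`, which bounds the
finite sections by `4` in operator norm, and the bound passes to `A_s` as the section size tends
to infinity.
-/

open Finset Filter Topology

lemma mul_div_add_mul_sq_add_le {μ K : ℝ} (hμ : 0 < μ) (hK : 0 < K) (a b : ℝ) :
    μ * K / (μ + K) * (a + b) ^ 2 ≤ μ * a ^ 2 + K * b ^ 2 := by
  rw [div_mul_eq_mul_div, div_le_iff₀ (by positivity)]
  nlinarith [sq_nonneg (μ * a - K * b)]

/- `0.3535 < 1 / (2 √2)`, and `0.696` is tuned so that both the base case of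
`hardy_partialSum_le` and this step hold at `t = 0.3535`. For `μ = 2 / (t + 0.696)` one has
`4 μ / (μ + 4) = 2 / (t + 1.196)`, so the step reduces to `(t + 1.196) (t + 1.696) ≤ (t + 1) (t + 2)`. -/
lemma hardy_step {t : ℝ} (ht : 0.3535 ≤ t) (a b : ℝ) :
    (1 / ((t + 1) * (t + 2)) + 2 / (t + 1 + 0.696)) * (a + b) ^ 2 ≤
      2 / (t + 0.696) * a ^ 2 + 4 * b ^ 2 := by
  have hμ : (0 : ℝ) < 2 / (t + 0.696) := by positivity
  have hcoeff : 1 / ((t + 1) * (t + 2)) + 2 / (t + 1 + 0.696) ≤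
      2 / (t + 0.696) * 4 / (2 / (t + 0.696) + 4) := by
    rw [div_add_div _ _ (by positivity) (by positivity),
      div_le_div_iff₀ (by positivity) (by positivity)]
    field_simp
    nlinarith
  calc _ ≤ 2 / (t + 0.696) * 4 / (2 / (t + 0.696) + 4) * (a + b) ^ 2 := by gcongr
    _ ≤ _ := mul_div_add_mul_sq_add_le hμ four_pos a b

lemma hardy_partialSum_le {s : ℝ} (hs : 0.3535 ≤ s) (u : ℕ → ℝ) (M : ℕ) :
    ∑ k ∈ range (M + 1), 1 / ((k + s) * (k + s + 1)) * (∑ n ∈ range (k + 1), u n) ^ 2 +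
        2 / (M + s + 0.696) * (∑ n ∈ range (M + 1), u n) ^ 2 ≤
      4 * ∑ n ∈ range (M + 1), u n ^ 2 := by
  induction M with
  | zero =>
    have hbase : 1 / (s * (s + 1)) + 2 / (s + 0.696) ≤ 4 := by
      rw [div_add_div _ _ (by positivity) (by positivity), div_le_iff₀ (by positivity)]
      nlinarith [mul_nonneg (sub_nonneg.2 hs) (sub_nonneg.2 hs)]
    simp only [zero_add, sum_range_one, CharP.cast_eq_zero]
    nlinarith [sq_nonneg (u 0)]
  | succ M ih =>
    have hstep := hardy_step (t := M + s) (by linarith [(M.cast_nonneg : (0 : ℝ) ≤ M)])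
      (∑ n ∈ range (M + 1), u n) (u (M + 1))
    rw [sum_range_succ _ (M + 1), sum_range_succ (fun n => u n ^ 2), sum_range_succ u (M + 1)]
    have hk : ((M + 1 : ℕ) : ℝ) + s = M + s + 1 := by push_cast; ring
    rw [hk, show (M : ℝ) + s + 1 + 1 = M + s + 2 by ring]
    linarith

namespace LMatrix

variable {s : ℝ}

noncomputable def truncMulVec (s : ℝ) (N : ℕ) (v : ℕ → ℝ) (n : ℕ) : ℝ :=
  ∑ j ∈ range N, v j / (max (n : ℝ) j + s)

noncomputable def truncForm (s : ℝ) (N : ℕ) (u v : ℕ → ℝ) : ℝ :=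
  ∑ n ∈ range N, u n * truncMulVec s N v n

lemma truncForm_comm (N : ℕ) (u v : ℕ → ℝ) : truncForm s N u v = truncForm s N v u := by
  simp only [truncForm, truncMulVec, mul_sum]
  rw [sum_comm]
  refine sum_congr rfl fun j _ => sum_congr rfl fun n _ => ?_
  rw [max_comm]
  ring

lemma truncForm_const_mul_sub (N : ℕ) (a : ℝ) (u w : ℕ → ℝ) :
    truncForm s N (fun n => a * u n - w n) (fun n => a * u n - w n) =
      a ^ 2 * truncForm s N u u - a * truncForm s N u w - a * truncForm s N w u +
        truncForm s N w w := by
  simp only [truncForm, truncMulVec, mul_sum, ← sum_sub_distrib, ← sum_add_distrib]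
  exact sum_congr rfl fun n _ => sum_congr rfl fun j _ => by ring

lemma truncForm_succ (N : ℕ) (u v : ℕ → ℝ) :
    truncForm s (N + 1) u v = truncForm s N u v +
      ((∑ n ∈ range N, u n) * v N + u N * ∑ j ∈ range (N + 1), v j) / (N + s) := by
  have hcol : ∀ n ∈ range N, u n * v N / (max (n : ℝ) N + s) = u n * v N / (N + s) := by
    intro n hn
    rw [max_eq_right (by exact_mod_cast (mem_range.1 hn).le)]
  have hrow : ∀ j ∈ range (N + 1), u N * v j / (max (N : ℝ) j + s) = u N * v j / (N + s) := by
    intro j hj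
    rw [max_eq_left (by exact_mod_cast mem_range_succ_iff.1 hj)]
  simp only [truncForm, truncMulVec, mul_sum, ← mul_div_assoc]
  rw [sum_range_succ, sum_congr rfl fun n _ => sum_range_succ _ N, sum_add_distrib,
    sum_congr rfl hcol, sum_congr rfl hrow, ← sum_div, ← sum_div, ← sum_mul, ← mul_sum]
  ring

/- Abel summation: `1 / (max n j + s) = ∑_{max n j ≤ k < N} 1 / ((k + s) (k + s + 1)) + 1 / (N + s)`. -/
lemma truncForm_eq_sum_partialSum (hs : 0 < s) (N : ℕ) (u v : ℕ → ℝ) :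
    truncForm s N u v = ∑ k ∈ range N, 1 / ((k + s) * (k + s + 1)) *
        ((∑ n ∈ range (k + 1), u n) * ∑ n ∈ range (k + 1), v n) +
      1 / (N + s) * ((∑ n ∈ range N, u n) * ∑ n ∈ range N, v n) := by
  induction N with
  | zero => simp [truncForm]
  | succ N ih =>
    have : (0 : ℝ) < N + s := by positivity
    rw [truncForm_succ, ih]
    simp only [sum_range_succ _ N]
    push_cast
    field_simp
    ring

lemma truncForm_self_nonneg (hs : 0 < s) (N : ℕ) (u : ℕ → ℝ) : 0 ≤ truncForm s N u u := by
  rw [truncForm_eq_sum_partialSum hs]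
  refine add_nonneg (sum_nonneg fun k _ => ?_) ?_ <;>
    exact mul_nonneg (by positivity) (mul_self_nonneg _)

lemma truncForm_self_le (hs : 0.3535 ≤ s) (N : ℕ) (u : ℕ → ℝ) :
    truncForm s N u u ≤ 4 * ∑ n ∈ range N, u n ^ 2 := by
  obtain _ | M := N
  · simp [truncForm]
  have hM : (0 : ℝ) ≤ M := M.cast_nonneg
  have hboundary : 1 / (((M + 1 : ℕ) : ℝ) + s) ≤ 2 / (M + s + 0.696) := by
    push_cast
    rw [div_le_div_iff₀ (by positivity) (by positivity)]
    linarith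
  rw [truncForm_eq_sum_partialSum (by linarith)]
  simp only [← sq]
  linarith [hardy_partialSum_le hs u M,
    mul_le_mul_of_nonneg_right hboundary (sq_nonneg (∑ n ∈ range (M + 1), u n))]

/- With `w = B u`, expand `0 ≤ B (4 u - w, 4 u - w)` and use `B (w, u) = ‖w‖²` and `B ≤ 4`. -/
lemma sum_sq_truncMulVec_le (hs : 0.3535 ≤ s) (N : ℕ) (u : ℕ → ℝ) :
    ∑ n ∈ range N, truncMulVec s N u n ^ 2 ≤ 16 * ∑ n ∈ range N, u n ^ 2 := by
  set w := truncMulVec s N u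
  have hwu : truncForm s N w u = ∑ n ∈ range N, w n ^ 2 := by simp only [truncForm, sq]; rfl
  have hpos := truncForm_self_nonneg (s := s) (by linarith) N (fun n => 4 * u n - w n)
  rw [truncForm_const_mul_sub, truncForm_comm N u w, hwu] at hpos
  linarith [truncForm_self_le hs N u, truncForm_self_le hs N w]

end LMatrix

lemma summable_one_div_nat_add_sq (a : ℝ) : Summable fun j : ℕ => 1 / ((j : ℝ) + a) ^ 2 := by
  refine ((Real.summable_one_div_nat_add_rpow a 2).2 one_lt_two).congr fun j => ?_
  rw [Real.rpow_two, sq_abs]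

lemma summable_div_max_add {s : ℝ} (hs : 0 < s) {x : ℕ → ℝ} (hx : Summable fun n => x n ^ 2)
    (n : ℕ) : Summable fun j : ℕ => x j / (max (n : ℝ) j + s) := by
  refine Summable.of_norm_bounded (hx.add (summable_one_div_nat_add_sq s)) fun j => ?_
  have hj : (0 : ℝ) < j + s := by positivity
  have hjn : (j : ℝ) + s ≤ max (n : ℝ) j + s := by gcongr; exact le_max_right _ _
  have hk : 1 / (max (n : ℝ) j + s) ≤ 1 / (j + s) := one_div_le_one_div_of_le hj hjn
  rw [Real.norm_eq_abs, abs_div, abs_of_pos (hj.trans_le hjn), div_eq_mul_one_div, ← one_div_pow]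
  nlinarith [two_mul_le_add_sq |x j| (1 / (j + s)), abs_nonneg (x j), sq_abs (x j),
    mul_le_mul_of_nonneg_left hk (abs_nonneg (x j)), sq_nonneg (1 / ((j : ℝ) + s))]

lemma le_one_div_two_mul_sqrt_two : (0.3535 : ℝ) ≤ 1 / (2 * √2) := by
  rw [le_div_iff₀ (by positivity)]
  nlinarith [Real.sq_sqrt (show (0 : ℝ) ≤ 2 by norm_num), Real.sqrt_nonneg 2]

/-- For every `s ≥ 1/(2√2)` and every square-summable real sequence `x`,
`‖A_s x‖₂ ≤ 4 ‖x‖₂`, i.e.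
`∑ₙ (∑ⱼ x_j/(max(n,j)+s))² ≤ 16 ∑ₙ x_n²`. -/
theorem As_norm_le_four (s : ℝ) (hs : 1 / (2 * Real.sqrt 2) ≤ s)
    (x : ℕ → ℝ) (hx : Summable fun n => (x n) ^ 2) :
    ∑' n : ℕ, (∑' j : ℕ, x j / ((max n j : ℝ) + s)) ^ 2 ≤
      16 * ∑' n : ℕ, (x n) ^ 2 := by
  have hs' : (0.3535 : ℝ) ≤ s := le_one_div_two_mul_sqrt_two.trans hs
  refine Real.tsum_le_of_sum_range_le (fun n => sq_nonneg _) fun M => ?_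
  have hlim : Tendsto (fun N => ∑ n ∈ range M, LMatrix.truncMulVec s N x n ^ 2) atTop
      (𝓝 (∑ n ∈ range M, (∑' j : ℕ, x j / ((max n j : ℝ) + s)) ^ 2)) :=
    tendsto_finsetSum _ fun n _ =>
      ((summable_div_max_add (by linarith) hx n).hasSum.tendsto_sum_nat).pow 2
  refine le_of_tendsto hlim (eventually_atTop.2 ⟨M, fun N hN => ?_⟩)
  calc ∑ n ∈ range M, LMatrix.truncMulVec s N x n ^ 2
      ≤ ∑ n ∈ range N, LMatrix.truncMulVec s N x n ^ 2 :=
        sum_le_sum_of_subset_of_nonneg (range_mono hN) fun _ _ _ => sq_nonneg _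
    _ ≤ 16 * ∑ n ∈ range N, x n ^ 2 := LMatrix.sum_sq_truncMulVec_le hs' N x
    _ ≤ 16 * ∑' n, x n ^ 2 := by gcongr; exact hx.sum_le_tsum _ fun _ _ => sq_nonneg _
end

section
/- Let s ≥ 1 be real and 1 < p < ∞. For every sequence x = (x_n)_{n≥0} of real numbers with Σ_{n≥0}|x_n|^p < ∞, one has ‖A_s x‖_p ≤ (p²/(p−1))‖x‖_p, i.e. Σ_{n=0}^∞ |Σ_{j=0}^∞ x_j/(max(n,j)+s)|^p ≤ (p²/(p−1))^p Σ_{n=0}^∞ |x_n|^p. -/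
/-!
The bound is a Schur test. For Hölder conjugates `p, q` and the weight
`w j = (j + s) ^ (-1 / (p q))`, both `∑ⱼ (A_s)ₙⱼ w_j ^ q ≤ p q · w_n ^ q` and
`∑ₙ (A_s)ₙⱼ w_n ^ p ≤ p q · w_j ^ p` are instances of the row estimate
`∑ⱼ (j + s) ^ (-t) / (max n j + s) ≤ (n + s) ^ (-t) / (t (1 - t))` (for `t = 1/p` and `t = 1/q`),
and `p q = p² / (p - 1)`. In the row estimate the terms with `j ≤ n` and with `j > n` are
compared with the telescoping sums of `(j + s - 1) ^ (1 - t) / (1 - t)` and `(j + s - 1) ^ (-t) / t`,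
through the tangent-line inequalities of the concave, resp. convex, functions `b ↦ b ^ (1 - t)`
and `b ↦ b ^ (-t)`.
-/

open Finset
open scoped ENNReal

theorem ENNReal.inner_le_Lp_mul_Lq_tsum {ι : Type*} {p q : ℝ} (hpq : p.HolderConjugate q)
    (f g : ι → ℝ≥0∞) :
    ∑' i, f i * g i ≤ (∑' i, f i ^ p) ^ (1 / p) * (∑' i, g i ^ q) ^ (1 / q) := by
  rw [ENNReal.tsum_eq_iSup_sum]
  refine iSup_le fun s => (ENNReal.inner_le_Lp_mul_Lq s f g hpq).trans ?_
  have hp := hpq.pos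
  have hq := hpq.symm.pos
  gcongr <;> exact ENNReal.sum_le_tsum s

theorem ENNReal.rpow_inner_le_weight_mul_Lp_tsum {ι : Type*} {p q : ℝ} (hpq : p.HolderConjugate q)
    (k a u : ι → ℝ≥0∞) (hu₀ : ∀ j, u j ≠ 0) (hu : ∀ j, u j ≠ ⊤) :
    (∑' j, k j * a j) ^ p ≤ (∑' j, k j * u j ^ q) ^ (p / q) * ∑' j, k j * (a j / u j) ^ p := by
  have hp := hpq.pos
  have hq := hpq.symm.pos
  have hfactor (j : ι) :
      k j * a j = (k j * u j ^ q) ^ (1 / q) * (k j * (a j / u j) ^ p) ^ (1 / p) := by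
    rw [ENNReal.mul_rpow_of_nonneg _ _ (by positivity),
      ENNReal.mul_rpow_of_nonneg _ _ (by positivity), ← ENNReal.rpow_mul, ← ENNReal.rpow_mul,
      mul_one_div_cancel hq.ne', mul_one_div_cancel hp.ne', ENNReal.rpow_one, ENNReal.rpow_one]
    calc k j * a j = k j ^ (1 / q + 1 / p) * (u j * (a j / u j)) := by
          rw [one_div, one_div, add_comm, hpq.inv_add_inv_eq_one, ENNReal.rpow_one,
            ENNReal.mul_div_cancel (hu₀ j) (hu j)]
      _ = _ := by rw [ENNReal.rpow_add_of_nonneg _ _ (by positivity) (by positivity)]; ring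
  calc (∑' j, k j * a j) ^ p
      ≤ ((∑' j, k j * u j ^ q) ^ (1 / q) * (∑' j, k j * (a j / u j) ^ p) ^ (1 / p)) ^ p := by
        rw [tsum_congr hfactor]
        refine ENNReal.rpow_le_rpow ((ENNReal.inner_le_Lp_mul_Lq_tsum hpq.symm _ _).trans_eq ?_)
          hp.le
        simp only [← ENNReal.rpow_mul, one_div_mul_cancel hq.ne', one_div_mul_cancel hp.ne',
          ENNReal.rpow_one]
    _ = (∑' j, k j * u j ^ q) ^ (p / q) * ∑' j, k j * (a j / u j) ^ p := by
        rw [ENNReal.mul_rpow_of_nonneg _ _ hp.le, ← ENNReal.rpow_mul, ← ENNReal.rpow_mul,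
          one_div_mul_cancel hp.ne', ENNReal.rpow_one, one_div_mul_eq_div]

theorem ENNReal.schur_test {ι κ : Type*} {p q : ℝ} (hpq : p.HolderConjugate q)
    {K : ι → κ → ℝ≥0∞} {u : κ → ℝ≥0∞} {v : ι → ℝ≥0∞} {C₁ C₂ : ℝ≥0∞}
    (hu₀ : ∀ j, u j ≠ 0) (hu : ∀ j, u j ≠ ⊤)
    (hrow : ∀ i, ∑' j, K i j * u j ^ q ≤ C₁ * v i ^ q)
    (hcol : ∀ j, ∑' i, K i j * v i ^ p ≤ C₂ * u j ^ p) (a : κ → ℝ≥0∞) :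
    ∑' i, (∑' j, K i j * a j) ^ p ≤ C₁ ^ (p / q) * C₂ * ∑' j, a j ^ p := by
  have hp := hpq.pos
  have hq := hpq.symm.pos
  calc ∑' i, (∑' j, K i j * a j) ^ p
      ≤ ∑' i, C₁ ^ (p / q) * (v i ^ p * ∑' j, K i j * (a j / u j) ^ p) := by
        refine ENNReal.tsum_le_tsum fun i =>
          (ENNReal.rpow_inner_le_weight_mul_Lp_tsum hpq _ _ _ hu₀ hu).trans ?_
        calc (∑' j, K i j * u j ^ q) ^ (p / q) * ∑' j, K i j * (a j / u j) ^ p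
            ≤ (C₁ * v i ^ q) ^ (p / q) * ∑' j, K i j * (a j / u j) ^ p := by
              gcongr
              exact hrow i
          _ = _ := by
              rw [ENNReal.mul_rpow_of_nonneg _ _ (by positivity), ← ENNReal.rpow_mul,
                mul_div_cancel₀ p hq.ne', mul_assoc]
    _ = C₁ ^ (p / q) * ∑' j, (a j / u j) ^ p * ∑' i, K i j * v i ^ p := by
        simp_rw [← ENNReal.tsum_mul_left]
        rw [ENNReal.tsum_comm]
        refine tsum_congr fun j => tsum_congr fun i => ?_
        ring
    _ ≤ C₁ ^ (p / q) * ∑' j, (a j / u j) ^ p * (C₂ * u j ^ p) := by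
        gcongr with j
        exact hcol j
    _ = C₁ ^ (p / q) * C₂ * ∑' j, a j ^ p := by
        rw [mul_assoc, ← ENNReal.tsum_mul_left (a := C₂)]
        congr 1
        refine tsum_congr fun j => ?_
        rw [mul_left_comm, ← ENNReal.mul_rpow_of_nonneg _ _ hp.le,
          ENNReal.div_mul_cancel (hu₀ j) (hu j)]

lemma one_sub_inv_rpow_le {b e : ℝ} (hb : 1 ≤ b) (he₀ : 0 ≤ e) (he₁ : e ≤ 1) :
    (1 - b⁻¹) ^ e ≤ 1 - e * b⁻¹ := by
  have hb' : -1 ≤ -b⁻¹ := neg_le_neg (inv_le_one_of_one_le₀ hb)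
  simpa [sub_eq_add_neg] using rpow_one_add_le_one_add_mul_self hb' he₀ he₁

lemma mul_rpow_sub_one_le_rpow_sub_rpow {b c : ℝ} (hb : 1 ≤ b) (hc₀ : 0 ≤ c) (hc₁ : c ≤ 1) :
    c * b ^ (c - 1) ≤ b ^ c - (b - 1) ^ c := by
  have hb₀ : 0 < b := by linarith
  have hsplit : (b - 1) ^ c = b ^ c * (1 - b⁻¹) ^ c := by
    rw [← Real.mul_rpow hb₀.le (by linarith [inv_le_one_of_one_le₀ hb])]
    congr 1
    field_simp
  have hbern := mul_le_mul_of_nonneg_left (one_sub_inv_rpow_le hb hc₀ hc₁)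
    (Real.rpow_nonneg hb₀.le c)
  rw [hsplit, Real.rpow_sub_one hb₀.ne']
  linarith [show b ^ c * (1 - c * b⁻¹) = b ^ c - c * (b ^ c / b) by ring]

lemma mul_rpow_neg_sub_one_le_rpow_neg_sub_rpow_neg {b m : ℝ} (hb : 1 < b) (hm₀ : 0 ≤ m)
    (hm₁ : m ≤ 1) : m * b ^ (-m - 1) ≤ (b - 1) ^ (-m) - b ^ (-m) := by
  have hb₀ : 0 < b := by linarith
  have ht : 0 < 1 - b⁻¹ := by linarith [inv_lt_one_of_one_lt₀ hb]
  have hsplit : (b - 1) ^ (-m) = b ^ (-m) * (1 - b⁻¹) ^ (-m) := by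
    rw [← Real.mul_rpow hb₀.le ht.le]
    congr 1
    field_simp
  have hinv : 1 + m * b⁻¹ ≤ (1 - b⁻¹) ^ (-m) := by
    rw [Real.rpow_neg ht.le, ← one_div ((1 - b⁻¹) ^ m), le_div_iff₀ (Real.rpow_pos_of_pos ht m)]
    calc (1 + m * b⁻¹) * (1 - b⁻¹) ^ m ≤ (1 + m * b⁻¹) * (1 - m * b⁻¹) := by
          gcongr
          exact one_sub_inv_rpow_le hb.le hm₀ hm₁
      _ ≤ 1 := by nlinarith [sq_nonneg (m * b⁻¹)]
  have hmul := mul_le_mul_of_nonneg_left hinv (Real.rpow_nonneg hb₀.le (-m))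
  rw [hsplit, Real.rpow_sub_one hb₀.ne']
  linarith [show b ^ (-m) * (1 + m * b⁻¹) = b ^ (-m) + m * (b ^ (-m) / b) by ring]

lemma sum_range_add_rpow_neg_le {s t : ℝ} (hs : 1 ≤ s) (ht₀ : 0 ≤ t) (ht₁ : t < 1) (n : ℕ) :
    ∑ j ∈ range (n + 1), ((j : ℝ) + s) ^ (-t) ≤ ((n : ℝ) + s) ^ (1 - t) / (1 - t) := by
  set G : ℕ → ℝ := fun j => ((j : ℝ) + (s - 1)) ^ (1 - t) with hG
  have hstep (j : ℕ) : (1 - t) * ((j : ℝ) + s) ^ (-t) ≤ G (j + 1) - G j := by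
    have := mul_rpow_sub_one_le_rpow_sub_rpow (b := (j : ℝ) + s) (c := 1 - t)
      (by linarith [j.cast_nonneg (α := ℝ)]) (by linarith) (by linarith)
    simp only [hG, Nat.cast_succ]
    convert this using 3 <;> ring
  rw [le_div_iff₀ (by linarith), mul_comm, mul_sum]
  calc ∑ j ∈ range (n + 1), (1 - t) * ((j : ℝ) + s) ^ (-t)
      ≤ ∑ j ∈ range (n + 1), (G (j + 1) - G j) := sum_le_sum fun j _ => hstep j
    _ = G (n + 1) - G 0 := sum_range_sub G (n + 1)
    _ ≤ G (n + 1) := sub_le_self _ (Real.rpow_nonneg (by simp; linarith) _)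
    _ = ((n : ℝ) + s) ^ (1 - t) := by simp only [hG, Nat.cast_succ]; ring_nf

lemma ENNReal.tsum_ofReal_sub_succ_le {F : ℕ → ℝ} (hF : ∀ i, F (i + 1) ≤ F i)
    (hF₀ : ∀ i, 0 ≤ F i) : ∑' i, ENNReal.ofReal (F i - F (i + 1)) ≤ ENNReal.ofReal (F 0) :=
  ENNReal.tsum_le_of_sum_range_le fun n => by
    rw [← ENNReal.ofReal_sum_of_nonneg fun i _ => sub_nonneg.2 (hF i), sum_range_sub']
    exact ENNReal.ofReal_le_ofReal (sub_le_self _ (hF₀ n))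

lemma tsum_ofReal_add_rpow_neg_sub_one_le {s t : ℝ} (hs : 1 ≤ s) (ht₀ : 0 < t) (ht₁ : t ≤ 1)
    (n : ℕ) : ∑' i : ℕ, ENNReal.ofReal ((((i + (n + 1) : ℕ) : ℝ) + s) ^ (-t - 1)) ≤
      ENNReal.ofReal (((n : ℝ) + s) ^ (-t) / t) := by
  set F : ℕ → ℝ := fun i => (((n + i : ℕ) : ℝ) + s) ^ (-t) / t with hF
  have hstep (i : ℕ) : (((i + (n + 1) : ℕ) : ℝ) + s) ^ (-t - 1) ≤ F i - F (i + 1) := by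
    have := mul_rpow_neg_sub_one_le_rpow_neg_sub_rpow_neg (b := ((i + (n + 1) : ℕ) : ℝ) + s)
      (by push_cast; linarith [i.cast_nonneg (α := ℝ), n.cast_nonneg (α := ℝ)]) ht₀.le ht₁
    rw [hF, ← sub_div, le_div_iff₀ ht₀, mul_comm]
    push_cast at this ⊢
    rwa [show (n : ℝ) + i + s = i + (n + 1) + s - 1 by ring,
      show (n : ℝ) + (i + 1) + s = i + (n + 1) + s by ring]
  calc ∑' i : ℕ, ENNReal.ofReal ((((i + (n + 1) : ℕ) : ℝ) + s) ^ (-t - 1))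
      ≤ ∑' i, ENNReal.ofReal (F i - F (i + 1)) :=
        ENNReal.tsum_le_tsum fun i => ENNReal.ofReal_le_ofReal (hstep i)
    _ ≤ ENNReal.ofReal (F 0) := by
        refine ENNReal.tsum_ofReal_sub_succ_le (fun i => ?_) (fun i => by positivity)
        have : (0 : ℝ) ≤ (((i + (n + 1) : ℕ) : ℝ) + s) ^ (-t - 1) := by positivity
        linarith [hstep i]
    _ = ENNReal.ofReal (((n : ℝ) + s) ^ (-t) / t) := by simp [hF]

noncomputable def lKernel (s : ℝ) (i j : ℕ) : ℝ≥0∞ := ENNReal.ofReal ((max i j : ℝ) + s)⁻¹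

lemma lKernel_comm (s : ℝ) (i j : ℕ) : lKernel s i j = lKernel s j i := by
  rw [lKernel, lKernel, max_comm]

lemma tsum_lKernel_mul_rpow_neg_le {s t : ℝ} (hs : 1 ≤ s) (ht₀ : 0 < t) (ht₁ : t < 1) (n : ℕ) :
    ∑' j, lKernel s n j * ENNReal.ofReal ((j : ℝ) + s) ^ (-t) ≤
      ENNReal.ofReal (t * (1 - t))⁻¹ * ENNReal.ofReal ((n : ℝ) + s) ^ (-t) := by
  simp only [lKernel]
  have hpos (j : ℕ) : 0 < (j : ℝ) + s := by positivity
  have hterm (j : ℕ) {d : ℝ} (hd : 0 ≤ d) :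
      ENNReal.ofReal d * ENNReal.ofReal ((j : ℝ) + s) ^ (-t) =
        ENNReal.ofReal (d * ((j : ℝ) + s) ^ (-t)) := by
    rw [ENNReal.ofReal_rpow_of_pos (hpos j), ← ENNReal.ofReal_mul hd]
  have head : ∑ j ∈ range (n + 1),
      ENNReal.ofReal ((max n j : ℝ) + s)⁻¹ * ENNReal.ofReal ((j : ℝ) + s) ^ (-t) ≤
        ENNReal.ofReal (((n : ℝ) + s) ^ (-t) / (1 - t)) := by
    have hmax (j : ℕ) (hj : j ∈ range (n + 1)) : (max n j : ℝ) = n := by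
      simpa [Nat.lt_succ_iff] using hj
    rw [sum_congr rfl fun j hj => by rw [hmax j hj, hterm j (by positivity)],
      ← ENNReal.ofReal_sum_of_nonneg fun j _ => by positivity, ← mul_sum]
    refine ENNReal.ofReal_le_ofReal ((mul_le_mul_of_nonneg_left
      (sum_range_add_rpow_neg_le hs ht₀.le ht₁ n) (by positivity)).trans_eq ?_)
    rw [sub_eq_add_neg, Real.rpow_add (hpos n), Real.rpow_one]
    field_simp
  have tail : ∑' i : ℕ, ENNReal.ofReal (max (n : ℝ) ((i + (n + 1) : ℕ) : ℝ) + s)⁻¹ *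
      ENNReal.ofReal (((i + (n + 1) : ℕ) : ℝ) + s) ^ (-t) ≤
        ENNReal.ofReal (((n : ℝ) + s) ^ (-t) / t) := by
    refine le_of_eq_of_le (tsum_congr fun i => ?_)
      (tsum_ofReal_add_rpow_neg_sub_one_le hs ht₀ ht₁.le n)
    rw [max_eq_right (by push_cast; linarith [i.cast_nonneg (α := ℝ)]), hterm _ (by positivity),
      Real.rpow_sub_one (hpos _).ne', div_eq_inv_mul]
  rw [← ENNReal.summable.sum_add_tsum_nat_add' (k := n + 1)]
  refine (add_le_add head tail).trans_eq ?_
  rw [← ENNReal.ofReal_add (by positivity) (by positivity), ENNReal.ofReal_rpow_of_pos (hpos n),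
    ← ENNReal.ofReal_mul (by have := sub_pos.2 ht₁; positivity)]
  congr 1
  have := (sub_pos.2 ht₁).ne'
  field_simp
  ring

lemma tsum_rpow_tsum_lKernel_mul_le {s p : ℝ} (hs : 1 ≤ s) (hp : 1 < p) (a : ℕ → ℝ≥0∞) :
    ∑' i, (∑' j, lKernel s i j * a j) ^ p ≤
      ENNReal.ofReal (p ^ 2 / (p - 1)) ^ p * ∑' j, a j ^ p := by
  set q := p / (p - 1) with hq
  have hpq : p.HolderConjugate q := .conjExponent hp
  have hp₀ := hpq.pos
  have hq₀ := hpq.symm.pos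
  have hbase (j : ℕ) : 0 < ENNReal.ofReal ((j : ℝ) + s) := ENNReal.ofReal_pos.2 (by positivity)
  set w : ℕ → ℝ≥0∞ := fun j => ENNReal.ofReal ((j : ℝ) + s) ^ (-(p * q)⁻¹) with hw
  have hw_rpow (j : ℕ) {r r' : ℝ} (hr : r ≠ 0) (hrr' : r * r' = p * q) :
      w j ^ r = ENNReal.ofReal ((j : ℝ) + s) ^ (-r'⁻¹) := by
    rw [hw, ← ENNReal.rpow_mul, ← hrr']
    congr 1
    field_simp
  have hconst {r r' : ℝ} (hrr' : r⁻¹ + r'⁻¹ = 1) (hprod : r * r' = p * q) :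
      ENNReal.ofReal (r⁻¹ * (1 - r⁻¹))⁻¹ = ENNReal.ofReal (p * q) := by
    rw [← hrr', add_sub_cancel_left, mul_inv, inv_inv, inv_inv, hprod]
  have hrow (i : ℕ) : ∑' j, lKernel s i j * w j ^ q ≤ ENNReal.ofReal (p * q) * w i ^ q := by
    simp only [hw_rpow _ hq₀.ne' (mul_comm q p)]
    rw [← hconst hpq.inv_add_inv_eq_one rfl]
    exact tsum_lKernel_mul_rpow_neg_le hs (by positivity) (inv_lt_one_of_one_lt₀ hp) i
  have hcol (j : ℕ) : ∑' i, lKernel s i j * w i ^ p ≤ ENNReal.ofReal (p * q) * w j ^ p := by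
    simp only [hw_rpow _ hp₀.ne' rfl, lKernel_comm s _ j]
    rw [← hconst hpq.symm.inv_add_inv_eq_one (mul_comm q p)]
    exact tsum_lKernel_mul_rpow_neg_le hs (by positivity)
      (inv_lt_one_of_one_lt₀ hpq.symm.lt) j
  have hpq_eq : p * q = p ^ 2 / (p - 1) := by rw [hq]; ring
  have hC₀ : ENNReal.ofReal (p * q) ≠ 0 := (ENNReal.ofReal_pos.2 (by positivity)).ne'
  refine (ENNReal.schur_test hpq (fun j => (ENNReal.rpow_pos (hbase j) ENNReal.ofReal_ne_top).ne')
    (fun j => ENNReal.rpow_ne_top_of_ne_zero (hbase j).ne' ENNReal.ofReal_ne_top) hrow hcol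
    a).trans_eq ?_
  rw [hpq.div_conj_eq_sub_one, ← hpq_eq]
  congr 1
  nth_rw 2 [← ENNReal.rpow_one (ENNReal.ofReal (p * q))]
  rw [← ENNReal.rpow_add _ _ hC₀ ENNReal.ofReal_ne_top, sub_add_cancel]

lemma tsum_abs_rpow_le_of_tsum_enorm_rpow_le {ι : Type*} {x y : ι → ℝ} {p C : ℝ} (hp : 0 ≤ p)
    (hC : 0 ≤ C) (hx : Summable fun i => |x i| ^ p)
    (h : ∑' i, ‖y i‖ₑ ^ p ≤ ENNReal.ofReal C * ∑' i, ‖x i‖ₑ ^ p) :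
    ∑' i, |y i| ^ p ≤ C * ∑' i, |x i| ^ p := by
  have henorm (z : ℝ) : ‖z‖ₑ ^ p = ENNReal.ofReal (|z| ^ p) := by
    rw [Real.enorm_eq_ofReal_abs, ENNReal.ofReal_rpow_of_nonneg (abs_nonneg z) hp]
  simp only [henorm] at h
  rw [← ENNReal.ofReal_tsum_of_nonneg (fun i => by positivity) hx, ← ENNReal.ofReal_mul hC] at h
  calc ∑' i, |y i| ^ p = (∑' i, ENNReal.ofReal (|y i| ^ p)).toReal := by
        rw [ENNReal.tsum_toReal_eq fun _ => ENNReal.ofReal_ne_top]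
        exact tsum_congr fun i => (ENNReal.toReal_ofReal (by positivity)).symm
    _ ≤ C * ∑' i, |x i| ^ p :=
        ENNReal.toReal_le_of_le_ofReal (mul_nonneg hC (tsum_nonneg fun i => by positivity)) h

/-- For `s ≥ 1`, `1 < p < ∞` and every real sequence `x` with `∑ |x_n|^p < ∞`,
`‖A_s x‖_p ≤ (p²/(p−1))‖x‖_p`, i.e.
`∑ₙ |∑ⱼ x_j/(max(n,j)+s)|^p ≤ (p²/(p−1))^p ∑ₙ |x_n|^p`. -/
theorem As_pnorm_le (s p : ℝ) (hs : 1 ≤ s) (hp : 1 < p)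
    (x : ℕ → ℝ) (hx : Summable fun n => |x n| ^ p) :
    ∑' n : ℕ, |∑' j : ℕ, x j / ((max n j : ℝ) + s)| ^ p ≤
      (p ^ 2 / (p - 1)) ^ p * ∑' n : ℕ, |x n| ^ p := by
  have hp₀ : 0 ≤ p := by linarith
  have hC : 0 < p ^ 2 / (p - 1) := by have := sub_pos.2 hp; positivity
  have hrow (n : ℕ) : ‖∑' j, x j / ((max n j : ℝ) + s)‖ₑ ≤ ∑' j, lKernel s n j * ‖x j‖ₑ := by
    refine enorm_tsum_le_tsum_enorm.trans_eq (tsum_congr fun j => ?_)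
    rw [div_eq_inv_mul, enorm_mul, Real.enorm_of_nonneg (by positivity), lKernel]
  refine tsum_abs_rpow_le_of_tsum_enorm_rpow_le hp₀ (by positivity) hx ?_
  rw [← ENNReal.ofReal_rpow_of_nonneg hC.le hp₀]
  exact (ENNReal.tsum_le_tsum fun n => ENNReal.rpow_le_rpow (hrow n) hp₀).trans
    (tsum_rpow_tsum_lKernel_mul_le hs hp _)
end

section
/- Let N ≥ 2 be a fixed integer and let C be the lacunary C-matrix associated with N. Then the operator norm of C on ℓ² equals √(N−1)/(√N − 1): sup_{x≠0, x∈ℓ²} ‖Cx‖₂/‖x‖₂ = √(N−1)/(√N − 1). -/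
/-!
Write `s = √N` and let `ℓ k` be the least `j` with `k ≤ N ^ (j + 1)`. The weights
`w k = s ^ -(ℓ k + 1)` satisfy `∑_{k ≤ N^(j+1)} w k ≤ (s + 1) s ^ j`, so Cauchy–Schwarz
against `w` (a Schur test) bounds `(Cx)²` at `N ^ (j + 1)` by
`(s + 1) / s · s ^ -(j+1) · ∑_{k ≤ N^(j+1)} x_k² / w_k`. Summing over `j` and exchanging the
sums, `x_k² / w_k` collects the geometric tail `∑_{j ≥ ℓ k} s ^ -(j+1) ≤ s w_k / (s - 1)`,
whence `‖Cx‖² ≤ (s + 1) / (s - 1) ‖x‖²`, and `(s + 1) / (s - 1) = (N - 1) / (s - 1)²`.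

The weights themselves, truncated to `[0, N^m]`, are asymptotically extremal: for them
`N ‖x‖² = (N - 1) m + 2` while `N ‖Cx‖² ≥ (s + 1)² m - 2 (s + 1)`, and the ratio tends to
`(s + 1)² / (N - 1) = (s + 1) / (s - 1)`.
-/

noncomputable def lacCoef (N : ℕ) (n : ℕ) : ℝ :=
  ∑' j : ℕ, if n = N ^ (j + 1) then (Real.sqrt N ^ (j + 1))⁻¹ else 0

noncomputable def lacC (N : ℕ) (x : ℕ → ℝ) (n : ℕ) : ℝ :=
  lacCoef N n * ∑ j ∈ Finset.range (n + 1), x j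

open Finset Filter Topology

lemma sum_Ico_inv_pow_succ_le {s : ℝ} (hs : 1 < s) (l J : ℕ) :
    ∑ j ∈ Ico l J, (s ^ (j + 1))⁻¹ ≤ ((s - 1) * s ^ l)⁻¹ := by
  have hs0 : 0 < s := by positivity
  have hs1 : s - 1 ≠ 0 := by linarith
  calc ∑ j ∈ Ico l J, (s ^ (j + 1))⁻¹ = s⁻¹ * ∑ j ∈ Ico l J, s⁻¹ ^ j := by
        rw [mul_sum]; congr! 1 with j; rw [pow_succ, mul_inv, inv_pow, mul_comm]
    _ ≤ s⁻¹ * (s⁻¹ ^ l / (1 - s⁻¹)) := by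
        gcongr
        exact geom_sum_Ico_le_of_lt_one (inv_pos.2 hs0).le (inv_lt_one_of_one_lt₀ hs)
    _ = ((s - 1) * s ^ l)⁻¹ := by
        rw [inv_pow]
        field_simp

lemma tendsto_mul_sub_div_mul_add {a b c d : ℝ} (hc : c ≠ 0) :
    Tendsto (fun m : ℕ => (a * m - b) / (c * m + d)) atTop (𝓝 (a / c)) := by
  have h := ((tendsto_const_nhds (x := a)).sub (tendsto_const_div_atTop_nhds_zero_nat b)).div
    ((tendsto_const_nhds (x := c)).add (tendsto_const_div_atTop_nhds_zero_nat d))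
    (by simpa using hc)
  rw [sub_zero, add_zero] at h
  refine h.congr' ((eventually_ne_atTop 0).mono fun m hm => ?_)
  have : (m : ℝ) ≠ 0 := by exact_mod_cast hm
  change (a - b / m) / (c + d / m) = (a * m - b) / (c * m + d)
  rw [← div_div_div_cancel_right₀ this (a * m - b)]
  congr 1 <;> field_simp

namespace LacunaryCMatrix

variable {N : ℕ}

lemma one_lt_sqrt_natCast (hN : 1 < N) : 1 < √(N : ℝ) := by
  rw [Real.lt_sqrt zero_le_one]
  exact_mod_cast hN

lemma sq_sqrt_natCast (N : ℕ) : √(N : ℝ) ^ 2 = N := Real.sq_sqrt N.cast_nonneg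

lemma natCast_sub_one_eq (N : ℕ) : (N : ℝ) - 1 = (√N - 1) * (√N + 1) := by
  linear_combination -sq_sqrt_natCast N

def level (N k : ℕ) : ℕ := Nat.clog N k - 1

lemma le_pow_succ_iff_level_le (hN : 1 < N) {k j : ℕ} :
    k ≤ N ^ (j + 1) ↔ level N k ≤ j := by
  rw [← Nat.clog_le_iff_le_pow hN, level]
  omega

lemma level_of_le_one {k : ℕ} (hk : k ≤ 1) : level N k = 0 := by
  simp [level, Nat.clog_of_right_le_one hk]

lemma level_eq_of_lt_of_le (hN : 1 < N) {k j : ℕ} (hk : N ^ j < k ∧ k ≤ N ^ (j + 1)) :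
    level N k = j := by
  refine le_antisymm ((le_pow_succ_iff_level_le hN).1 hk.2) (not_lt.1 fun h => ?_)
  obtain ⟨i, rfl⟩ : ∃ i, j = i + 1 := ⟨j - 1, by omega⟩
  exact hk.1.not_ge ((le_pow_succ_iff_level_le hN).2 (by omega))

lemma sum_level_range_pow_zero {M : Type*} [AddCommMonoid M] (g : ℕ → M) :
    ∑ k ∈ range (N ^ 0 + 1), g (level N k) = 2 • g 0 := by
  simp [sum_range_succ, level_of_le_one, two_nsmul]

lemma sum_level_range_pow_succ (hN : 1 < N) {M : Type*} [AddCommMonoid M] (g : ℕ → M)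
    (j : ℕ) :
    ∑ k ∈ range (N ^ (j + 1) + 1), g (level N k)
      = ∑ k ∈ range (N ^ j + 1), g (level N k) + (N ^ (j + 1) - N ^ j) • g j := by
  have hle : N ^ j ≤ N ^ (j + 1) := Nat.pow_le_pow_right (by omega) j.le_succ
  rw [← sum_range_add_sum_Ico _ (by omega : N ^ j + 1 ≤ N ^ (j + 1) + 1)]
  congr 1
  rw [sum_congr rfl fun k hk => congrArg g <|
      level_eq_of_lt_of_le (j := j) hN (by rw [mem_Ico] at hk; omega),
    sum_const, Nat.card_Ico]
  congr 1
  omega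

lemma sum_level_range_pow_eq (hN : 1 < N) (g F : ℕ → ℝ) (h₀ : 2 * g 0 = F 0)
    (hstep : ∀ j, F j + ((N : ℝ) ^ (j + 1) - N ^ j) * g j = F (j + 1)) (m : ℕ) :
    ∑ k ∈ range (N ^ m + 1), g (level N k) = F m := by
  induction m with
  | zero => rw [sum_level_range_pow_zero, nsmul_eq_mul, Nat.cast_two, h₀]
  | succ m ih =>
    rw [sum_level_range_pow_succ hN, ih, nsmul_eq_mul, ← hstep,
      Nat.cast_sub (Nat.pow_le_pow_right (by omega) (by omega : m ≤ m + 1))]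
    push_cast
    rfl

noncomputable def weight (N k : ℕ) : ℝ := (√(N : ℝ) ^ (level N k + 1))⁻¹

lemma weight_pos (hN : 1 < N) (k : ℕ) : 0 < weight N k := by
  have := one_lt_sqrt_natCast hN
  unfold weight
  positivity

lemma sum_weight (hN : 1 < N) (m : ℕ) :
    ∑ k ∈ range (N ^ m + 1), weight N k = ((√N + 1) * √N ^ m - (√N - 1)) / √N := by
  refine sum_level_range_pow_eq hN (fun j => (√(N : ℝ) ^ (j + 1))⁻¹)
    (fun m => ((√N + 1) * √N ^ m - (√N - 1)) / √N) ?_ (fun j => ?_) m <;>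
  · have hs := one_lt_sqrt_natCast hN
    have hNs := sq_sqrt_natCast N
    generalize √(N : ℝ) = s at hs hNs ⊢
    generalize (N : ℝ) = n at hNs ⊢
    subst hNs
    have : s ≠ 0 := by positivity
    push_cast
    field_simp
    ring

lemma sum_weight_sq (hN : 1 < N) (m : ℕ) :
    ∑ k ∈ range (N ^ m + 1), weight N k ^ 2 = ((N - 1) * m + 2) / N := by
  refine sum_level_range_pow_eq hN (fun j => (√(N : ℝ) ^ (j + 1))⁻¹ ^ 2)
    (fun m => ((N - 1) * m + 2) / N) ?_ (fun j => ?_) m <;>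
  · have hs := one_lt_sqrt_natCast hN
    have hNs := sq_sqrt_natCast N
    generalize √(N : ℝ) = s at hs hNs ⊢
    generalize (N : ℝ) = n at hNs ⊢
    subst hNs
    have : s ≠ 0 := by positivity
    push_cast
    field_simp
    ring

lemma lacCoef_pow_succ (hN : 1 < N) (j : ℕ) :
    lacCoef N (N ^ (j + 1)) = (√N ^ (j + 1))⁻¹ := by
  rw [lacCoef, tsum_eq_single j fun i hi => if_neg fun h => hi ?_, if_pos rfl]
  simpa using Nat.pow_right_injective hN h.symm

lemma lacCoef_eq_zero {n : ℕ} (hn : n ∉ Set.range fun j => N ^ (j + 1)) :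
    lacCoef N n = 0 := by
  rw [lacCoef, tsum_congr fun j => if_neg fun h => hn ⟨j, h.symm⟩, tsum_zero]

lemma sq_lacC_pow_succ_le (hN : 1 < N) (x : ℕ → ℝ) (j : ℕ) :
    lacC N x (N ^ (j + 1)) ^ 2 ≤ (√N ^ (j + 1))⁻¹ *
      ((√N + 1) / √N * ∑ k ∈ range (N ^ (j + 1) + 1), x k ^ 2 / weight N k) := by
  have hs := one_lt_sqrt_natCast hN
  set S := ∑ k ∈ range (N ^ (j + 1) + 1), x k ^ 2 / weight N k
  have hS : 0 ≤ S := sum_nonneg fun k _ => div_nonneg (sq_nonneg _) (weight_pos hN k).le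
  have hCS := sq_sum_div_le_sum_sq_div (range (N ^ (j + 1) + 1)) x fun k _ => weight_pos hN k
  rw [div_le_iff₀ (sum_pos (fun k _ => weight_pos hN k) nonempty_range_add_one),
    sum_weight hN] at hCS
  calc lacC N x (N ^ (j + 1)) ^ 2
      = (√N ^ (j + 1))⁻¹ ^ 2 * (∑ k ∈ range (N ^ (j + 1) + 1), x k) ^ 2 := by
        rw [lacC, lacCoef_pow_succ hN, mul_pow]
    _ ≤ (√N ^ (j + 1))⁻¹ ^ 2 * (S * ((√N + 1) * √N ^ (j + 1) / √N)) := by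
        gcongr
        exact hCS.trans (by gcongr; linarith)
    _ = _ := by field_simp

lemma sum_range_sq_lacC_le (hN : 1 < N) (x : ℕ → ℝ) (J : ℕ) :
    ∑ j ∈ range J, lacC N x (N ^ (j + 1)) ^ 2
      ≤ (√N + 1) / (√N - 1) * ∑ k ∈ range (N ^ J + 1), x k ^ 2 := by
  have hs := one_lt_sqrt_natCast hN
  have hswap : ∀ j k, j ∈ range J ∧ k ∈ range (N ^ (j + 1) + 1) ↔
      j ∈ Ico (level N k) J ∧ k ∈ range (N ^ J + 1) := fun j k => by
    simp only [mem_range, mem_Ico, Nat.lt_succ_iff]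
    constructor
    · rintro ⟨hj, hk⟩
      exact ⟨⟨(le_pow_succ_iff_level_le hN).1 hk, hj⟩,
        hk.trans (Nat.pow_le_pow_right (by omega) hj)⟩
    · rintro ⟨⟨hk, hj⟩, -⟩
      exact ⟨hj, (le_pow_succ_iff_level_le hN).2 hk⟩
  calc ∑ j ∈ range J, lacC N x (N ^ (j + 1)) ^ 2
      ≤ ∑ j ∈ range J, ∑ k ∈ range (N ^ (j + 1) + 1),
          (√N ^ (j + 1))⁻¹ * ((√N + 1) / √N * (x k ^ 2 / weight N k)) := by
        gcongr with j
        simp only [← mul_sum]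
        exact sq_lacC_pow_succ_le hN x j
    _ = ∑ k ∈ range (N ^ J + 1), ∑ j ∈ Ico (level N k) J,
          (√N ^ (j + 1))⁻¹ * ((√N + 1) / √N * (x k ^ 2 / weight N k)) := sum_comm' hswap
    _ ≤ ∑ k ∈ range (N ^ J + 1), (√N + 1) / (√N - 1) * x k ^ 2 := by
        gcongr with k
        have := weight_pos hN k
        rw [← sum_mul]
        calc _ ≤ ((√N - 1) * √N ^ level N k)⁻¹ * ((√N + 1) / √N * (x k ^ 2 / weight N k)) := by
              gcongr
              exact sum_Ico_inv_pow_succ_le hs _ _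
          _ = _ := by
              have : √(N : ℝ) - 1 ≠ 0 := by linarith
              rw [weight]
              field_simp
              ring
    _ = _ := (mul_sum ..).symm

lemma tsum_sq_lacC_eq (hN : 1 < N) (x : ℕ → ℝ) :
    ∑' n, lacC N x n ^ 2 = ∑' j, lacC N x (N ^ (j + 1)) ^ 2 := by
  have hinj : Function.Injective fun j => N ^ (j + 1) :=
    (Nat.pow_right_injective hN).comp (add_left_injective 1)
  refine (hinj.tsum_eq (f := fun n => lacC N x n ^ 2) fun n hn => ?_).symm
  by_contra h
  exact hn (by simp [lacC, lacCoef_eq_zero h])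

lemma sum_range_sq_lacC_le_tsum (hN : 1 < N) {x : ℕ → ℝ} (hx : Summable fun n => x n ^ 2)
    (J : ℕ) :
    ∑ j ∈ range J, lacC N x (N ^ (j + 1)) ^ 2 ≤ (√N + 1) / (√N - 1) * ∑' n, x n ^ 2 := by
  have hs := one_lt_sqrt_natCast hN
  refine (sum_range_sq_lacC_le hN x J).trans ?_
  gcongr
  exact hx.sum_le_tsum _ fun n _ => sq_nonneg _

lemma summable_sq_lacC_pow_succ (hN : 1 < N) {x : ℕ → ℝ} (hx : Summable fun n => x n ^ 2) :
    Summable fun j => lacC N x (N ^ (j + 1)) ^ 2 :=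
  summable_of_sum_range_le (fun _ => sq_nonneg _) (sum_range_sq_lacC_le_tsum hN hx)

lemma tsum_sq_lacC_le (hN : 1 < N) {x : ℕ → ℝ} (hx : Summable fun n => x n ^ 2) :
    ∑' n, lacC N x n ^ 2 ≤ (√N + 1) / (√N - 1) * ∑' n, x n ^ 2 := by
  rw [tsum_sq_lacC_eq hN]
  exact Real.tsum_le_of_sum_range_le (fun _ => sq_nonneg _) (sum_range_sq_lacC_le_tsum hN hx)

noncomputable def testVec (N m k : ℕ) : ℝ := if k ≤ N ^ m then weight N k else 0

lemma testVec_sq_eq_zero {m k : ℕ} (hk : k ∉ range (N ^ m + 1)) : testVec N m k ^ 2 = 0 := by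
  rw [testVec, if_neg (by simpa [Nat.lt_succ_iff] using hk), sq, zero_mul]

lemma summable_sq_testVec (N m : ℕ) : Summable fun k => testVec N m k ^ 2 :=
  summable_of_ne_finset_zero fun _ => testVec_sq_eq_zero

lemma tsum_sq_testVec (hN : 1 < N) (m : ℕ) :
    ∑' k, testVec N m k ^ 2 = ((N - 1) * m + 2) / N := by
  rw [tsum_eq_sum fun _ => testVec_sq_eq_zero, ← sum_weight_sq hN m]
  exact sum_congr rfl fun k hk => by rw [testVec, if_pos (Nat.lt_succ_iff.1 (mem_range.1 hk))]

lemma testVec_ne_zero (hN : 1 < N) (m : ℕ) : testVec N m ≠ 0 := fun h => by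
  have := congrFun h 0
  rw [testVec, if_pos (Nat.zero_le _)] at this
  exact (weight_pos hN 0).ne' this

lemma lacC_testVec_pow_succ (hN : 1 < N) {m j : ℕ} (hj : j < m) :
    lacC N (testVec N m) (N ^ (j + 1))
      = ((√N + 1) - (√N - 1) * (√N ^ (j + 1))⁻¹) / √N := by
  have hs := one_lt_sqrt_natCast hN
  have hsub : ∀ k ∈ range (N ^ (j + 1) + 1), testVec N m k = weight N k := fun k hk =>
    if_pos ((Nat.lt_succ_iff.1 (mem_range.1 hk)).trans (Nat.pow_le_pow_right (by omega) hj))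
  rw [lacC, lacCoef_pow_succ hN, sum_congr rfl hsub, sum_weight hN]
  have : √(N : ℝ) ≠ 0 := by positivity
  field_simp

lemma le_tsum_sq_lacC_testVec (hN : 1 < N) (m : ℕ) :
    ((√N + 1) ^ 2 * m - 2 * (√N + 1)) / N ≤ ∑' n, lacC N (testVec N m) n ^ 2 := by
  have hs := one_lt_sqrt_natCast hN
  rw [tsum_sq_lacC_eq hN]
  refine le_trans ?_ ((summable_sq_lacC_pow_succ hN (summable_sq_testVec N m)).sum_le_tsum
    (range m) fun _ _ => sq_nonneg _)
  have htail : ∑ j ∈ range m, (√N - 1) * (√N ^ (j + 1))⁻¹ ≤ 1 := by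
    have hs1 : 0 < √(N : ℝ) - 1 := by linarith
    rw [← mul_sum, range_eq_Ico]
    calc (√N - 1) * ∑ j ∈ Ico 0 m, (√N ^ (j + 1))⁻¹
        ≤ (√N - 1) * ((√N - 1) * √N ^ 0)⁻¹ := by
          gcongr
          exact sum_Ico_inv_pow_succ_le hs 0 m
      _ = 1 := by field_simp
  calc ((√N + 1) ^ 2 * m - 2 * (√N + 1)) / N
      ≤ ∑ j ∈ range m, ((√N + 1) ^ 2 - 2 * (√N + 1) * ((√N - 1) * (√N ^ (j + 1))⁻¹)) / N := by
        rw [← sum_div, sum_sub_distrib, sum_const, card_range, nsmul_eq_mul, ← mul_sum]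
        gcongr ?_ / _
        nlinarith
    _ ≤ ∑ j ∈ range m, lacC N (testVec N m) (N ^ (j + 1)) ^ 2 := by
        gcongr with j hj
        rw [lacC_testVec_pow_succ hN (mem_range.1 hj), div_pow, sq_sqrt_natCast]
        gcongr
        nlinarith [sq_nonneg ((√N - 1) * (√N ^ (j + 1))⁻¹)]

lemma sqrt_le_ratio_testVec (hN : 1 < N) (m : ℕ) :
    √(((√N + 1) ^ 2 * m - 2 * (√N + 1)) / ((N - 1) * m + 2))
      ≤ √(∑' n, lacC N (testVec N m) n ^ 2) / √(∑' k, testVec N m k ^ 2) := by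
  have hN' : (1 : ℝ) < N := by exact_mod_cast hN
  rw [← Real.sqrt_div' _ (tsum_nonneg fun _ => sq_nonneg _), tsum_sq_testVec hN,
    div_div_eq_mul_div]
  gcongr
  rw [← div_le_iff₀ (by positivity)]
  exact le_tsum_sq_lacC_testVec hN m

lemma sq_sqrt_sub_one_div (hN : 1 < N) :
    (√((N : ℝ) - 1) / (√N - 1)) ^ 2 = (√N + 1) / (√N - 1) := by
  have hs := one_lt_sqrt_natCast hN
  have : √(N : ℝ) - 1 ≠ 0 := by linarith
  rw [div_pow, Real.sq_sqrt (sub_nonneg.2 (by exact_mod_cast hN.le)), natCast_sub_one_eq]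
  field_simp

lemma sqrt_tsum_sq_lacC_div_le (hN : 1 < N) {x : ℕ → ℝ} (hx : Summable fun n => x n ^ 2) :
    √(∑' n, lacC N x n ^ 2) / √(∑' n, x n ^ 2) ≤ √((N : ℝ) - 1) / (√N - 1) := by
  have hL : 0 ≤ √((N : ℝ) - 1) / (√N - 1) :=
    div_nonneg (Real.sqrt_nonneg _) (by linarith [one_lt_sqrt_natCast hN])
  refine div_le_of_le_mul₀ (Real.sqrt_nonneg _) hL ?_
  rw [← Real.sqrt_sq hL, ← Real.sqrt_mul (sq_nonneg _), sq_sqrt_sub_one_div hN]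
  exact Real.sqrt_le_sqrt (tsum_sq_lacC_le hN hx)

lemma tendsto_sqrt_lower_bound (hN : 1 < N) :
    Tendsto (fun m : ℕ => √(((√N + 1) ^ 2 * m - 2 * (√N + 1)) / ((N - 1) * m + 2))) atTop
      (𝓝 (√((N : ℝ) - 1) / (√N - 1))) := by
  have hs := one_lt_sqrt_natCast hN
  have : √(N : ℝ) - 1 ≠ 0 := by linarith
  have hN1 : (N : ℝ) - 1 ≠ 0 := by rw [natCast_sub_one_eq]; positivity
  convert (tendsto_mul_sub_div_mul_add (a := (√N + 1) ^ 2) (b := 2 * (√N + 1)) (d := 2)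
    hN1).sqrt using 2
  rw [← Real.sqrt_sq (div_nonneg (Real.sqrt_nonneg _) (by linarith)), sq_sqrt_sub_one_div hN,
    natCast_sub_one_eq]
  field_simp

end LacunaryCMatrix

open LacunaryCMatrix

/-- For `N ≥ 2`, the operator norm of the lacunary `C`-matrix on `ℓ²` equals
`√(N−1)/(√N − 1)`. -/
theorem lacC_opNorm (N : ℕ) (hN : 2 ≤ N) :
    sSup { r : ℝ | ∃ x : ℕ → ℝ, Summable (fun n => (x n) ^ 2) ∧ x ≠ 0 ∧
        r = Real.sqrt (∑' n : ℕ, (lacC N x n) ^ 2) /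
            Real.sqrt (∑' n : ℕ, (x n) ^ 2) } =
      Real.sqrt ((N : ℝ) - 1) / (Real.sqrt (N : ℝ) - 1) := by
  refine IsLUB.csSup_eq ⟨?_, fun b hb => ?_⟩
    ⟨_, testVec N 0, summable_sq_testVec N 0, testVec_ne_zero hN 0, rfl⟩
  · rintro _ ⟨x, hx, -, rfl⟩
    exact sqrt_tsum_sq_lacC_div_le hN hx
  · exact le_of_tendsto' (tendsto_sqrt_lower_bound hN) fun m =>
      (sqrt_le_ratio_testVec hN m).trans
        (hb ⟨testVec N m, summable_sq_testVec N m, testVec_ne_zero hN m, rfl⟩)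
end

section
/- Let N ≥ 2 be a fixed integer and let C be the lacunary C-matrix associated with N. For every square-summable sequence x = (x_n)_{n≥0} of real numbers, ‖Cx‖₂² ≤ ((N−1)/(√N − 1)²)‖x‖₂², i.e. Σ_{j=1}^∞ N^{−j} (Σ_{k=0}^{N^j} x_k)² ≤ ((N−1)/(√N − 1)²) Σ_{n=0}^∞ x_n². -/
/-!
Cut `[0, N^(j+1)]` into the blocks `[0, N]` and `(N^i, N^(i+1)]`, and write `c = √N`.
Cauchy–Schwarz with the geometric weights `u_i ≈ c^i` (normalised so that `∑_{i ≤ j} u_i`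
is exactly `c^(j+1)/(c-1)`) bounds the `j`-th partial sum squared by `c^(j+1)/(c-1)` times a
weighted sum of the squared block sums. Exchanging the order of summation, each block then
collects the geometric tail `∑_{j ≥ i} c^-(j+1) = c^-i/(c-1)`, and Cauchy–Schwarz inside each
block, of size at most `(N-1) c^i u_i`, finishes the proof.
-/

open Finset

namespace LacunaryC

def block (N i : ℕ) : Finset ℕ :=
  if i = 0 then range (N + 1) else Ioc (N ^ i) (N ^ (i + 1))

lemma sum_range_pow_succ_add_one_eq_sum_block (N : ℕ) (f : ℕ → ℝ) (j : ℕ) :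
    ∑ k ∈ range (N ^ (j + 1) + 1), f k = ∑ i ∈ range (j + 1), ∑ k ∈ block N i, f k := by
  induction j with
  | zero => simp [block]
  | succ j ih =>
    have hmono : N ^ (j + 1) + 1 ≤ N ^ (j + 2) + 1 := by
      rcases N.eq_zero_or_pos with rfl | hN
      · simp
      · exact Nat.add_le_add_right (Nat.pow_le_pow_right hN (by omega)) 1
    rw [sum_range_succ _ (j + 1), ← ih, block, if_neg j.succ_ne_zero, range_eq_Ico,
      ← sum_Ico_consecutive f (Nat.zero_le _) hmono, Ico_add_one_add_one_eq_Ioc, ← range_eq_Ico]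

/-- Weights with `∑_{i ≤ j} geomWeight c i = c^(j+1)/(c-1)`: the first one absorbs the
geometric series `∑_{k < 0} c^k`. -/
noncomputable def geomWeight (c : ℝ) : ℕ → ℝ
  | 0 => c / (c - 1)
  | i + 1 => c ^ (i + 1)

lemma geomWeight_pos {c : ℝ} (hc : 1 < c) : ∀ i, 0 < geomWeight c i
  | 0 => div_pos (by linarith) (by linarith)
  | i + 1 => pow_pos (by linarith) _

lemma sum_range_geomWeight {c : ℝ} (hc : c ≠ 1) (j : ℕ) :
    ∑ i ∈ range (j + 1), geomWeight c i = c ^ (j + 1) / (c - 1) := by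
  have hc' : c - 1 ≠ 0 := sub_ne_zero.mpr hc
  induction j with
  | zero => simp [geomWeight]
  | succ j ih =>
    rw [sum_range_succ, ih, geomWeight]
    field_simp
    ring

lemma sq_sum_range_le_geomWeight {c : ℝ} (hc : 1 < c) (B : ℕ → ℝ) (j : ℕ) :
    (∑ i ∈ range (j + 1), B i) ^ 2 ≤
      c ^ (j + 1) / (c - 1) * ∑ i ∈ range (j + 1), B i ^ 2 / geomWeight c i := by
  rw [← sum_range_geomWeight hc.ne' j]
  refine sum_sq_le_sum_mul_sum_of_sq_le_mul _ (fun i _ => (geomWeight_pos hc i).le)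
    (fun i _ => div_nonneg (sq_nonneg _) (geomWeight_pos hc i).le) fun i _ => ?_
  rw [mul_div_cancel₀ _ (geomWeight_pos hc i).ne']

lemma sum_Ico_inv_pow_succ_le {c : ℝ} (hc : 1 < c) (i J : ℕ) :
    ∑ j ∈ Ico i J, (c ^ (j + 1))⁻¹ ≤ (c ^ i)⁻¹ * (c - 1)⁻¹ := by
  have hc0 : 0 < c := by linarith
  have hgeom := geom_sum_Ico_le_of_lt_one (m := i) (n := J) (inv_nonneg.mpr hc0.le)
    (inv_lt_one_of_one_lt₀ hc)
  calc ∑ j ∈ Ico i J, (c ^ (j + 1))⁻¹ = c⁻¹ * ∑ j ∈ Ico i J, c⁻¹ ^ j := by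
        rw [mul_sum]; exact sum_congr rfl fun j _ => by rw [← inv_pow, pow_succ']
    _ ≤ c⁻¹ * (c⁻¹ ^ i / (1 - c⁻¹)) := mul_le_mul_of_nonneg_left hgeom (by positivity)
    _ = (c ^ i)⁻¹ * (c - 1)⁻¹ := by rw [inv_pow]; field_simp

lemma sum_range_inv_pow_mul_sq_sum_le {c : ℝ} (hc : 1 < c) (B : ℕ → ℝ) (J : ℕ) :
    ∑ j ∈ range J, ((c ^ 2) ^ (j + 1))⁻¹ * (∑ i ∈ range (j + 1), B i) ^ 2 ≤
      ((c - 1) ^ 2)⁻¹ * ∑ i ∈ range J, B i ^ 2 / (c ^ i * geomWeight c i) := by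
  set v : ℕ → ℝ := fun i => B i ^ 2 / geomWeight c i
  have hv : ∀ i, 0 ≤ v i := fun i => div_nonneg (sq_nonneg _) (geomWeight_pos hc i).le
  calc ∑ j ∈ range J, ((c ^ 2) ^ (j + 1))⁻¹ * (∑ i ∈ range (j + 1), B i) ^ 2
      ≤ ∑ j ∈ range J, ((c ^ 2) ^ (j + 1))⁻¹ * (c ^ (j + 1) / (c - 1) *
          ∑ i ∈ range (j + 1), v i) :=
        sum_le_sum fun j _ => mul_le_mul_of_nonneg_left
          (sq_sum_range_le_geomWeight hc B j) (by positivity)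
    _ = (c - 1)⁻¹ * ∑ j ∈ Ico 0 J, ∑ i ∈ Ico 0 (j + 1), (c ^ (j + 1))⁻¹ * v i := by
        rw [mul_sum, ← range_eq_Ico]
        refine sum_congr rfl fun j _ => ?_
        rw [← range_eq_Ico, mul_sum, mul_sum, mul_sum]
        refine sum_congr rfl fun i _ => ?_
        field_simp
        ring
    _ = (c - 1)⁻¹ * ∑ i ∈ range J, (∑ j ∈ Ico i J, (c ^ (j + 1))⁻¹) * v i := by
        rw [← sum_Ico_Ico_comm, range_eq_Ico]
        simp only [sum_mul]
    _ ≤ (c - 1)⁻¹ * ∑ i ∈ range J, (c ^ i)⁻¹ * (c - 1)⁻¹ * v i := by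
        gcongr with i
        · exact hv i
        · exact sum_Ico_inv_pow_succ_le hc i J
    _ = ((c - 1) ^ 2)⁻¹ * ∑ i ∈ range J, B i ^ 2 / (c ^ i * geomWeight c i) := by
        rw [mul_sum, mul_sum]
        refine sum_congr rfl fun i _ => ?_
        have := (geomWeight_pos hc i).ne'
        simp only [v]
        field_simp

lemma card_block_le {N : ℕ} {c : ℝ} (hc : 1 < c) (hN : (N : ℝ) = c ^ 2) (i : ℕ) :
    (#(block N i) : ℝ) ≤ (c ^ 2 - 1) * (c ^ i * geomWeight c i) := by
  have hc1 : 0 < c - 1 := by linarith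
  cases i with
  | zero =>
    rw [block, if_pos rfl, card_range, geomWeight, pow_zero, one_mul, mul_div_assoc',
      le_div_iff₀ hc1]
    push_cast
    nlinarith [sq_nonneg (c - 1)]
  | succ i =>
    have hN0 : 0 < N := Nat.cast_pos.mp (by rw [hN]; positivity)
    rw [block, if_neg i.succ_ne_zero, Nat.card_Ioc,
      Nat.cast_sub (Nat.pow_le_pow_right hN0 (by omega)), geomWeight]
    push_cast
    rw [hN]
    exact le_of_eq (by ring)

lemma sq_sum_block_div_le {N : ℕ} {c : ℝ} (hc : 1 < c) (hN : (N : ℝ) = c ^ 2) (f : ℕ → ℝ)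
    (i : ℕ) : (∑ k ∈ block N i, f k) ^ 2 / (c ^ i * geomWeight c i) ≤
      (c ^ 2 - 1) * ∑ k ∈ block N i, f k ^ 2 := by
  have hw : 0 < c ^ i * geomWeight c i := mul_pos (by positivity) (geomWeight_pos hc i)
  rw [div_le_iff₀ hw]
  calc (∑ k ∈ block N i, f k) ^ 2 ≤ #(block N i) * ∑ k ∈ block N i, f k ^ 2 :=
        sq_sum_le_card_mul_sum_sq
    _ ≤ (c ^ 2 - 1) * (c ^ i * geomWeight c i) * ∑ k ∈ block N i, f k ^ 2 :=
        mul_le_mul_of_nonneg_right (card_block_le hc hN i) (sum_nonneg fun _ _ => sq_nonneg _)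
    _ = _ := by ring

end LacunaryC

open Finset LacunaryC

/-- For `N ≥ 2` and every square-summable real sequence `x`,
`‖Cx‖₂² ≤ ((N−1)/(√N − 1)²)‖x‖₂²`, where `C` is the lacunary `C`-matrix, i.e.
`∑_{j=1}^∞ N^{−j} (∑_{k=0}^{N^j} x_k)² ≤ ((N−1)/(√N − 1)²) ∑ₙ x_n²`. -/
theorem lacC_norm_le (N : ℕ) (hN : 2 ≤ N)
    (x : ℕ → ℝ) (hx : Summable fun n => (x n) ^ 2) :
    ∑' j : ℕ, ((N : ℝ) ^ (j + 1))⁻¹ * (∑ k ∈ Finset.range (N ^ (j + 1) + 1), x k) ^ 2 ≤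
      ((N : ℝ) - 1) / (Real.sqrt (N : ℝ) - 1) ^ 2 * ∑' n : ℕ, (x n) ^ 2 := by
  set c := Real.sqrt (N : ℝ)
  have hc2 : c ^ 2 = N := Real.sq_sqrt N.cast_nonneg
  have hc : 1 < c := (Real.lt_sqrt zero_le_one).2 (by norm_num; exact_mod_cast hN)
  have hblocks : ∀ J, ∑ i ∈ range J, ∑ k ∈ block N i, x k ^ 2 ≤ ∑' n, x n ^ 2 := fun J =>
    calc ∑ i ∈ range J, ∑ k ∈ block N i, x k ^ 2
        ≤ ∑ i ∈ range (J + 1), ∑ k ∈ block N i, x k ^ 2 :=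
          sum_le_sum_of_subset_of_nonneg (range_subset_range.2 J.le_succ)
            fun _ _ _ => sum_nonneg fun _ _ => sq_nonneg _
      _ ≤ ∑' n, x n ^ 2 := by
          rw [← sum_range_pow_succ_add_one_eq_sum_block]
          exact hx.sum_le_tsum _ fun _ _ => sq_nonneg _
  refine Real.tsum_le_of_sum_range_le (fun j => by positivity) fun J => ?_
  rw [← hc2]
  simp_rw [sum_range_pow_succ_add_one_eq_sum_block N x]
  calc _ ≤ ((c - 1) ^ 2)⁻¹ * ∑ i ∈ range J,
          (∑ k ∈ block N i, x k) ^ 2 / (c ^ i * geomWeight c i) :=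
        sum_range_inv_pow_mul_sq_sum_le hc _ J
    _ ≤ ((c - 1) ^ 2)⁻¹ * ∑ i ∈ range J, (c ^ 2 - 1) * ∑ k ∈ block N i, x k ^ 2 := by
        gcongr with i
        exact sq_sum_block_div_le hc hc2.symm x i
    _ ≤ ((c - 1) ^ 2)⁻¹ * ((c ^ 2 - 1) * ∑' n, x n ^ 2) := by
        rw [← mul_sum]
        gcongr
        · nlinarith
        · exact hblocks J
    _ = (c ^ 2 - 1) / (c - 1) ^ 2 * ∑' n, x n ^ 2 := by ring
end

section
/- Let N ≥ 2 be a fixed integer and let C be the lacunary C-matrix associated with N. For every ε > 0 there exists a nonzero square-summable sequence x = (x_n)_{n≥0} of nonnegative reals such that ‖Cx‖₂ ≥ (√(N−1)/(√N − 1) − ε)‖x‖₂. Consequently sup_{x≠0, x∈ℓ²} ‖Cx‖₂/‖x‖₂ ≥ √(N−1)/(√N − 1). -/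
open Finset

section Lacunary

variable {N : ℕ}

lemma one_lt_sqrt_of_two_le (hN : 2 ≤ N) : 1 < √(N : ℝ) := by
  rw [Real.lt_sqrt zero_le_one]
  exact_mod_cast (by omega : 1 ^ 2 < N)

lemma sum_Ico_one_pow_comp_log (hN : 0 < N) (f : ℕ → ℝ) (J : ℕ) :
    ∑ i ∈ Ico 1 (N ^ J), f (Nat.log N i) = ∑ k ∈ range J, ((N : ℝ) - 1) * N ^ k * f k := by
  induction J with
  | zero => simp
  | succ J ih =>
    have hle : N ^ J ≤ N ^ (J + 1) := Nat.pow_le_pow_right hN J.le_succ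
    rw [sum_range_succ, ← ih, ← sum_Ico_consecutive _ (Nat.one_le_pow _ _ hN) hle]
    congr 1
    rw [sum_congr rfl fun i hi =>
      by rw [Nat.log_eq_of_pow_le_of_lt_pow (mem_Ico.1 hi).1 (mem_Ico.1 hi).2]]
    rw [sum_const, Nat.card_Ico, nsmul_eq_mul]
    push_cast [hle]
    ring

lemma sum_Ico_inv_sqrt_pow_log (hN : 2 ≤ N) (m : ℕ) :
    ∑ i ∈ Ico 1 (N ^ m), (√N ^ Nat.log N i)⁻¹ = (√N + 1) * (√N ^ m - 1) := by
  have hσ := one_lt_sqrt_of_two_le hN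
  have hσN : (N : ℝ) = √N ^ 2 := (Real.sq_sqrt (Nat.cast_nonneg N)).symm
  rw [sum_Ico_one_pow_comp_log (by omega) (fun k => (√N ^ k)⁻¹)]
  have hterm : ∀ k, ((N : ℝ) - 1) * N ^ k * (√N ^ k)⁻¹ = (√N - 1) * (√N + 1) * √N ^ k :=
    fun k => by
      rw [show (N : ℝ) ^ k = (√N ^ k) ^ 2 by rw [← pow_mul, mul_comm, pow_mul, ← hσN],
        show (N : ℝ) - 1 = (√N - 1) * (√N + 1) by linear_combination hσN]
      field_simp
  simp only [hterm, ← mul_sum, geom_sum_eq hσ.ne']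
  field_simp [(sub_pos.2 hσ).ne']

lemma injective_pow_succ (hN : 2 ≤ N) : Function.Injective fun j : ℕ => N ^ (j + 1) :=
  fun _ _ hab => Nat.succ_injective (Nat.pow_right_injective hN hab)

lemma lacCoef_pow (hN : 2 ≤ N) {m : ℕ} (hm : 1 ≤ m) : lacCoef N (N ^ m) = (√N ^ m)⁻¹ := by
  obtain ⟨j, rfl⟩ := Nat.exists_eq_add_of_le' hm
  rw [lacCoef, tsum_eq_single j fun k hk => if_neg fun h => hk (injective_pow_succ hN h).symm]
  simp

lemma lacC_pow (hN : 2 ≤ N) (x : ℕ → ℝ) {m : ℕ} (hm : 1 ≤ m) :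
    lacC N x (N ^ m) = (√N ^ m)⁻¹ * ∑ i ∈ range (N ^ m + 1), x i := by
  rw [lacC, lacCoef_pow hN hm]

lemma lacC_eq_zero_of_notMem_range (x : ℕ → ℝ) {n : ℕ}
    (hn : n ∉ Set.range fun j : ℕ => N ^ (j + 1)) : lacC N x n = 0 := by
  have hcoef : lacCoef N n = 0 := by
    rw [lacCoef]
    exact (tsum_congr fun j => if_neg fun h => hn ⟨j, h.symm⟩).trans tsum_zero
  rw [lacC, hcoef, zero_mul]

lemma summable_lacC_sq_iff (hN : 2 ≤ N) (x : ℕ → ℝ) :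
    Summable (fun n => lacC N x n ^ 2) ↔ Summable fun j => lacC N x (N ^ (j + 1)) ^ 2 :=
  ((injective_pow_succ hN).summable_iff fun n hn => by
    rw [lacC_eq_zero_of_notMem_range x hn, sq, zero_mul]).symm

lemma tsum_lacC_sq (hN : 2 ≤ N) (x : ℕ → ℝ) :
    ∑' n, lacC N x n ^ 2 = ∑' j, lacC N x (N ^ (j + 1)) ^ 2 :=
  ((injective_pow_succ hN).tsum_eq <| Function.support_subset_iff'.2 fun n hn => by
    rw [lacC_eq_zero_of_notMem_range x hn, sq, zero_mul]).symm

lemma sum_range_inv_sqrt_pow_log_le (hN : 2 ≤ N) (m : ℕ) :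
    ∑ i ∈ range (N ^ m + 1), (√N ^ Nat.log N i)⁻¹ ≤ (√N + 3) * √N ^ m := by
  have hσ := one_lt_sqrt_of_two_le hN
  have hσm : 1 ≤ √N ^ m := one_le_pow₀ hσ.le
  have hlast : (√N ^ Nat.log N (N ^ m))⁻¹ ≤ 1 := by
    rw [Nat.log_pow (by omega)]
    exact inv_le_one_of_one_le₀ hσm
  rw [sum_range_succ, sum_range_eq_add_Ico _ (by positivity),
    sum_Ico_inv_sqrt_pow_log hN, Nat.log_zero_right, pow_zero, inv_one]
  nlinarith

lemma lacC_pow_sq_le (hN : 2 ≤ N) (x : ℕ → ℝ) {m : ℕ} (hm : 1 ≤ m) :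
    lacC N x (N ^ m) ^ 2 ≤ (√N + 3) *
      ((√N ^ m)⁻¹ * ∑ i ∈ range (N ^ m + 1), √N ^ Nat.log N i * x i ^ 2) := by
  have hCS : (∑ i ∈ range (N ^ m + 1), x i) ^ 2 ≤ (∑ i ∈ range (N ^ m + 1), (√N ^ Nat.log N i)⁻¹)
      * ∑ i ∈ range (N ^ m + 1), √N ^ Nat.log N i * x i ^ 2 :=
    sum_sq_le_sum_mul_sum_of_sq_le_mul _ (fun i _ => by positivity) (fun i _ => by positivity)
      fun i _ => by rw [inv_mul_cancel_left₀ (by positivity)]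
  have hQ : 0 ≤ ∑ i ∈ range (N ^ m + 1), √N ^ Nat.log N i * x i ^ 2 :=
    sum_nonneg fun i _ => by positivity
  calc lacC N x (N ^ m) ^ 2 = ((√N ^ m)⁻¹) ^ 2 * (∑ i ∈ range (N ^ m + 1), x i) ^ 2 := by
        rw [lacC_pow hN x hm, mul_pow]
    _ ≤ ((√N ^ m)⁻¹) ^ 2 * (((√N + 3) * √N ^ m)
          * ∑ i ∈ range (N ^ m + 1), √N ^ Nat.log N i * x i ^ 2) := by
        gcongr
        exact hCS.trans (mul_le_mul_of_nonneg_right (sum_range_inv_sqrt_pow_log_le hN m) hQ)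
    _ = _ := by field_simp

lemma sum_Ico_inv_sqrt_pow_mul_sum_le (hN : 2 ≤ N) {y : ℕ → ℝ} (hy : ∀ i, 0 ≤ y i) (T : ℕ) :
    ∑ m ∈ Ico 1 (T + 1), (√N ^ m)⁻¹ * ∑ i ∈ range (N ^ m + 1), √N ^ Nat.log N i * y i
      ≤ √N / (√N - 1) * ∑ i ∈ range (N ^ T + 1), y i := by
  have hσ := one_lt_sqrt_of_two_le hN
  have hr : (√N)⁻¹ < 1 := inv_lt_one_of_one_lt₀ hσ
  simp only [mul_sum]
  rw [sum_comm' (t' := range (N ^ T + 1))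
    (s' := fun i => (Ico 1 (T + 1)).filter fun m => i ≤ N ^ m) fun m i => by
      simp only [mem_Ico, mem_range, mem_filter]
      constructor
      · rintro ⟨hm, hi⟩
        have := Nat.pow_le_pow_right (by omega : 0 < N) (Nat.lt_succ_iff.1 hm.2)
        exact ⟨⟨hm, by omega⟩, by omega⟩
      · rintro ⟨⟨hm, hi⟩, _⟩
        exact ⟨hm, by omega⟩]
  refine sum_le_sum fun i _ => ?_
  calc ∑ m ∈ (Ico 1 (T + 1)).filter (fun m => i ≤ N ^ m), (√N ^ m)⁻¹ * (√N ^ Nat.log N i * y i)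
      = (∑ m ∈ (Ico 1 (T + 1)).filter (fun m => i ≤ N ^ m), (√N)⁻¹ ^ m)
          * (√N ^ Nat.log N i * y i) := by simp only [sum_mul, inv_pow]
    _ ≤ (√N)⁻¹ ^ Nat.log N i / (1 - (√N)⁻¹) * (√N ^ Nat.log N i * y i) := by
        refine mul_le_mul_of_nonneg_right ?_ (by have := hy i; positivity)
        refine (sum_le_sum_of_subset_of_nonneg (fun m hm => ?_) fun _ _ _ => by positivity).trans
          (geom_sum_Ico_le_of_lt_one (n := T + 1) (by positivity) hr)
        simp only [mem_filter, mem_Ico] at hm ⊢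
        refine ⟨?_, hm.1.2⟩
        calc Nat.log N i ≤ Nat.log N (N ^ m) := Nat.log_mono_right hm.2
          _ = m := Nat.log_pow (by omega) m
    _ = √N / (√N - 1) * y i := by
        rw [div_mul_eq_mul_div, ← mul_assoc, inv_pow, inv_mul_cancel₀ (by positivity), one_mul]
        field_simp

lemma sum_range_lacC_pow_succ_sq_le (hN : 2 ≤ N) (x : ℕ → ℝ) (T : ℕ) :
    ∑ j ∈ range T, lacC N x (N ^ (j + 1)) ^ 2
      ≤ (√N + 3) * (√N / (√N - 1)) * ∑ i ∈ range (N ^ T + 1), x i ^ 2 := by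
  calc ∑ j ∈ range T, lacC N x (N ^ (j + 1)) ^ 2
      = ∑ m ∈ Ico 1 (T + 1), lacC N x (N ^ m) ^ 2 := by
        rw [range_eq_Ico, sum_Ico_add' (fun m => lacC N x (N ^ m) ^ 2), zero_add]
    _ ≤ ∑ m ∈ Ico 1 (T + 1), (√N + 3) *
          ((√N ^ m)⁻¹ * ∑ i ∈ range (N ^ m + 1), √N ^ Nat.log N i * x i ^ 2) :=
        sum_le_sum fun m hm => lacC_pow_sq_le hN x (mem_Ico.1 hm).1
    _ ≤ (√N + 3) * (√N / (√N - 1) * ∑ i ∈ range (N ^ T + 1), x i ^ 2) := by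
        rw [← mul_sum]
        gcongr
        exact sum_Ico_inv_sqrt_pow_mul_sum_le hN (fun i => sq_nonneg (x i)) T
    _ = _ := (mul_assoc _ _ _).symm

lemma lacC_bound_nonneg (hN : 2 ≤ N) : 0 ≤ (√N + 3) * (√N / (√N - 1)) := by
  have hσ := one_lt_sqrt_of_two_le hN
  exact mul_nonneg (by positivity) (div_nonneg (by positivity) (by linarith))

lemma sum_range_lacC_pow_succ_sq_le_tsum (hN : 2 ≤ N) {x : ℕ → ℝ}
    (hx : Summable fun n => x n ^ 2) (T : ℕ) :
    ∑ j ∈ range T, lacC N x (N ^ (j + 1)) ^ 2 ≤ (√N + 3) * (√N / (√N - 1)) * ∑' n, x n ^ 2 :=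
  (sum_range_lacC_pow_succ_sq_le hN x T).trans <| mul_le_mul_of_nonneg_left
    (hx.sum_le_tsum _ fun _ _ => sq_nonneg _) (lacC_bound_nonneg hN)

lemma summable_lacC_sq (hN : 2 ≤ N) {x : ℕ → ℝ} (hx : Summable fun n => x n ^ 2) :
    Summable fun n => lacC N x n ^ 2 :=
  (summable_lacC_sq_iff hN x).2 <|
    summable_of_sum_range_le (fun _ => sq_nonneg _) (sum_range_lacC_pow_succ_sq_le_tsum hN hx)

lemma tsum_lacC_sq_le (hN : 2 ≤ N) {x : ℕ → ℝ} (hx : Summable fun n => x n ^ 2) :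
    ∑' n, lacC N x n ^ 2 ≤ (√N + 3) * (√N / (√N - 1)) * ∑' n, x n ^ 2 := by
  rw [tsum_lacC_sq hN]
  exact Real.tsum_le_of_sum_range_le (fun _ => sq_nonneg _)
    (sum_range_lacC_pow_succ_sq_le_tsum hN hx)

/-- The equality case of the Cauchy–Schwarz step in `lacC_pow_sq_le`, truncated to `[1, N ^ J)`. -/
noncomputable def lacWitness (N J : ℕ) (n : ℕ) : ℝ :=
  if n ∈ Ico 1 (N ^ J) then (√N ^ Nat.log N n)⁻¹ else 0

lemma lacWitness_nonneg (N J n : ℕ) : 0 ≤ lacWitness N J n := by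
  unfold lacWitness
  split_ifs <;> positivity

lemma lacWitness_ne_zero (hN : 2 ≤ N) {J : ℕ} (hJ : 1 ≤ J) : lacWitness N J ≠ 0 := by
  have h1 : 1 < N ^ J := Nat.one_lt_pow (by omega) (by omega)
  refine Function.ne_iff.2 ⟨1, ?_⟩
  simp [lacWitness, h1]

lemma summable_lacWitness_sq (N J : ℕ) : Summable fun n => lacWitness N J n ^ 2 :=
  summable_of_ne_finset_zero (s := Ico 1 (N ^ J)) fun n hn => by simp [lacWitness, hn]

lemma tsum_lacWitness_sq (hN : 2 ≤ N) (J : ℕ) :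
    ∑' n, lacWitness N J n ^ 2 = (N - 1) * J := by
  have hterm : ∀ k, ((N : ℝ) - 1) * N ^ k * ((√N ^ k)⁻¹) ^ 2 = N - 1 := fun k => by
    rw [inv_pow, ← pow_mul, mul_comm k 2, pow_mul, Real.sq_sqrt (Nat.cast_nonneg N)]
    field_simp
  rw [tsum_eq_sum (s := Ico 1 (N ^ J)) fun n hn => by simp [lacWitness, hn],
    sum_congr rfl fun n hn => by rw [lacWitness, if_pos hn],
    sum_Ico_one_pow_comp_log (by omega) fun k => ((√N ^ k)⁻¹) ^ 2]
  simp only [hterm, sum_const, card_range, nsmul_eq_mul]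
  ring

lemma lacC_lacWitness_pow_ge (hN : 2 ≤ N) {J m : ℕ} (hm : 1 ≤ m) (hmJ : m ≤ J) :
    (√N + 1) * (1 - (√N ^ m)⁻¹) ≤ lacC N (lacWitness N J) (N ^ m) := by
  have hNm := Nat.pow_le_pow_right (by omega : 0 < N) hmJ
  have hsub : Ico 1 (N ^ m) ⊆ range (N ^ m + 1) := fun i hi => by
    simp only [mem_Ico, mem_range] at hi ⊢
    omega
  have hpart : ∑ i ∈ Ico 1 (N ^ m), lacWitness N J i = (√N + 1) * (√N ^ m - 1) := by
    rw [← sum_Ico_inv_sqrt_pow_log hN m]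
    refine sum_congr rfl fun i hi => if_pos ?_
    simp only [mem_Ico] at hi ⊢
    omega
  rw [lacC_pow hN _ hm]
  calc (√N + 1) * (1 - (√N ^ m)⁻¹) = (√N ^ m)⁻¹ * ((√N + 1) * (√N ^ m - 1)) := by
        field_simp
    _ ≤ _ := by
        rw [← hpart]
        refine mul_le_mul_of_nonneg_left ?_ (by positivity)
        exact sum_le_sum_of_subset_of_nonneg hsub fun i _ _ => lacWitness_nonneg N J i

lemma tsum_lacC_lacWitness_sq_ge (hN : 2 ≤ N) (J : ℕ) :
    (√N + 1) ^ 2 * (J - 2 / (√N - 1)) ≤ ∑' n, lacC N (lacWitness N J) n ^ 2 := by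
  have hσ := one_lt_sqrt_of_two_le hN
  have hgeom : ∑ j ∈ range J, (√N ^ (j + 1))⁻¹ ≤ 1 / (√N - 1) :=
    calc ∑ j ∈ range J, (√N ^ (j + 1))⁻¹ = (√N)⁻¹ * ∑ j ∈ Ico 0 J, (√N)⁻¹ ^ j := by
          simp only [← range_eq_Ico, mul_sum, pow_succ', mul_inv, inv_pow]
      _ ≤ (√N)⁻¹ * ((√N)⁻¹ ^ 0 / (1 - (√N)⁻¹)) := by
          gcongr
          exact geom_sum_Ico_le_of_lt_one (by positivity) (inv_lt_one_of_one_lt₀ hσ)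
      _ = 1 / (√N - 1) := by field_simp
  have hterm : ∀ j ∈ range J, (√N + 1) ^ 2 * (1 - 2 * (√N ^ (j + 1))⁻¹)
      ≤ lacC N (lacWitness N J) (N ^ (j + 1)) ^ 2 := fun j hj => by
    have hq : (√N ^ (j + 1))⁻¹ ≤ 1 := inv_le_one_of_one_le₀ (one_le_pow₀ hσ.le)
    have h := lacC_lacWitness_pow_ge hN (J := J) (m := j + 1) (by omega)
      (by simp only [mem_range] at hj; omega)
    calc (√N + 1) ^ 2 * (1 - 2 * (√N ^ (j + 1))⁻¹)
        ≤ ((√N + 1) * (1 - (√N ^ (j + 1))⁻¹)) ^ 2 := by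
          rw [mul_pow]
          gcongr
          nlinarith [sq_nonneg (√N ^ (j + 1))⁻¹]
      _ ≤ _ := pow_le_pow_left₀ (mul_nonneg (by positivity) (by linarith)) h 2
  have hsummable := (summable_lacC_sq_iff hN _).1 (summable_lacC_sq hN (summable_lacWitness_sq N J))
  calc (√N + 1) ^ 2 * (J - 2 / (√N - 1))
      ≤ ∑ j ∈ range J, (√N + 1) ^ 2 * (1 - 2 * (√N ^ (j + 1))⁻¹) := by
        rw [← mul_sum, sum_sub_distrib, ← mul_sum, sum_const, card_range, nsmul_eq_mul, mul_one]
        gcongr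
        have : 2 / (√N - 1) = 2 * (1 / (√N - 1)) := by ring
        linarith
    _ ≤ ∑ j ∈ range J, lacC N (lacWitness N J) (N ^ (j + 1)) ^ 2 := sum_le_sum hterm
    _ ≤ ∑' j, lacC N (lacWitness N J) (N ^ (j + 1)) ^ 2 :=
        hsummable.sum_le_tsum _ fun _ _ => sq_nonneg _
    _ = _ := (tsum_lacC_sq hN _).symm

lemma lacC_lacWitness_norm_ge (hN : 2 ≤ N) {J : ℕ} (hJ : 2 / (√N - 1) ≤ J) :
    √(N - 1) / (√N - 1) * (1 - 2 / (√N - 1) / J) * √(∑' n, lacWitness N J n ^ 2)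
      ≤ √(∑' n, lacC N (lacWitness N J) n ^ 2) := by
  have hσ := one_lt_sqrt_of_two_le hN
  have hσN : (N : ℝ) = √N ^ 2 := (Real.sq_sqrt (Nat.cast_nonneg N)).symm
  have hN1 : (N : ℝ) - 1 = (√N - 1) * (√N + 1) := by linear_combination hσN
  set c := 2 / (√N - 1)
  have hc : 0 < c := div_pos two_pos (sub_pos.2 hσ)
  have hJpos : (0 : ℝ) < J := hc.trans_le hJ
  have ht : (1 - c / J) ^ 2 ≤ 1 - c / J := by
    have := div_le_one_of_le₀ hJ hJpos.le
    nlinarith [div_nonneg hc.le hJpos.le]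
  refine (le_abs_self _).trans (Real.abs_le_sqrt ?_)
  rw [mul_pow, mul_pow, div_pow, Real.sq_sqrt (tsum_nonneg fun _ => sq_nonneg _),
    Real.sq_sqrt (sub_nonneg.2 (by exact_mod_cast (by omega : 1 ≤ N))), tsum_lacWitness_sq hN, hN1]
  refine le_trans ?_ (tsum_lacC_lacWitness_sq_ge hN J)
  calc (√N - 1) * (√N + 1) / (√N - 1) ^ 2 * (1 - c / J) ^ 2 * ((√N - 1) * (√N + 1) * J)
      = (√N + 1) ^ 2 * J * (1 - c / J) ^ 2 := by
        field_simp [(sub_pos.2 hσ).ne']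
    _ ≤ (√N + 1) ^ 2 * J * (1 - c / J) := by gcongr
    _ = (√N + 1) ^ 2 * (J - c) := by
        field_simp

theorem exists_lacC_ge (hN : 2 ≤ N) {ε : ℝ} (hε : 0 < ε) :
    ∃ x : ℕ → ℝ, (∀ n, 0 ≤ x n) ∧ x ≠ 0 ∧ Summable (fun n => x n ^ 2) ∧
      (√(N - 1) / (√N - 1) - ε) * √(∑' n, x n ^ 2) ≤ √(∑' n, lacC N x n ^ 2) := by
  have hσ := one_lt_sqrt_of_two_le hN
  set L := √(N - 1) / (√N - 1)
  set c := 2 / (√N - 1)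
  have hc : 0 < c := div_pos two_pos (sub_pos.2 hσ)
  have hL : 0 ≤ L := div_nonneg (Real.sqrt_nonneg _) (sub_pos.2 hσ).le
  obtain ⟨J, hJ⟩ := exists_nat_gt (c + L * c / ε)
  have hLc : 0 ≤ L * c / ε := by positivity
  have hJpos : (0 : ℝ) < J := by linarith
  have hLcJ : L * (c / J) ≤ ε := by
    have h : L * c / ε < J := by linarith
    rw [div_lt_iff₀ hε] at h
    rw [← mul_div_assoc, div_le_iff₀ hJpos]
    linarith
  refine ⟨lacWitness N J, lacWitness_nonneg N J, lacWitness_ne_zero hN (by exact_mod_cast hJpos),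
    summable_lacWitness_sq N J, le_trans ?_ (lacC_lacWitness_norm_ge hN (by linarith))⟩
  exact mul_le_mul_of_nonneg_right (by linarith) (Real.sqrt_nonneg _)

lemma sqrt_tsum_lacC_sq_div_le (hN : 2 ≤ N) {x : ℕ → ℝ} (hx : Summable fun n => x n ^ 2) :
    √(∑' n, lacC N x n ^ 2) / √(∑' n, x n ^ 2) ≤ √((√N + 3) * (√N / (√N - 1))) := by
  refine div_le_of_le_mul₀ (Real.sqrt_nonneg _) (Real.sqrt_nonneg _) ?_
  rw [← Real.sqrt_mul (lacC_bound_nonneg hN)]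
  exact Real.sqrt_le_sqrt (tsum_lacC_sq_le hN hx)

end Lacunary

lemma tsum_sq_pos_of_ne_zero {ι : Type*} {x : ι → ℝ} (hx : Summable fun n => x n ^ 2)
    (hx0 : x ≠ 0) : 0 < ∑' n, x n ^ 2 := by
  obtain ⟨n, hn⟩ := Function.ne_iff.1 hx0
  exact hx.tsum_pos (fun _ => sq_nonneg _) n (sq_pos_iff.2 hn)

/-- For `N ≥ 2`: for every `ε > 0` there is a nonzero square-summable sequence
of nonnegative reals `x` with `‖Cx‖₂ ≥ (√(N−1)/(√N − 1) − ε)‖x‖₂`; consequently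
the operator norm of the lacunary `C`-matrix on `ℓ²` is at least
`√(N−1)/(√N − 1)`. -/
theorem lacC_opNorm_ge (N : ℕ) (hN : 2 ≤ N) :
    (∀ ε : ℝ, 0 < ε →
      ∃ x : ℕ → ℝ, (∀ n, 0 ≤ x n) ∧ x ≠ 0 ∧ Summable (fun n => (x n) ^ 2) ∧
        Real.sqrt (∑' n : ℕ, (lacC N x n) ^ 2) ≥
          (Real.sqrt ((N : ℝ) - 1) / (Real.sqrt (N : ℝ) - 1) - ε) *
            Real.sqrt (∑' n : ℕ, (x n) ^ 2)) ∧
    sSup { r : ℝ | ∃ x : ℕ → ℝ, Summable (fun n => (x n) ^ 2) ∧ x ≠ 0 ∧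
        r = Real.sqrt (∑' n : ℕ, (lacC N x n) ^ 2) /
            Real.sqrt (∑' n : ℕ, (x n) ^ 2) } ≥
      Real.sqrt ((N : ℝ) - 1) / (Real.sqrt (N : ℝ) - 1) := by
  refine ⟨fun ε hε => exists_lacC_ge hN hε, le_of_forall_sub_le fun ε hε => ?_⟩
  obtain ⟨x, -, hx0, hx, hCx⟩ := exists_lacC_ge hN hε
  have hxpos : 0 < √(∑' n, x n ^ 2) := Real.sqrt_pos.2 (tsum_sq_pos_of_ne_zero hx hx0)
  refine le_csSup_of_le ⟨√((√N + 3) * (√N / (√N - 1))), ?_⟩ ⟨x, hx, hx0, rfl⟩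
    ((le_div_iff₀ hxpos).2 hCx)
  -- an unbounded set would have `sSup = 0`
  rintro _ ⟨y, hy, -, rfl⟩
  exact sqrt_tsum_lacC_sq_div_le hN hy
end

section
/- Let m ≥ 1 and N ≥ 2 be integers, and let x = (x_k)_{k≥0} be the sequence with x_k = 1 for 0 ≤ k ≤ N, x_k = N^{−n/2} for N^n < k ≤ N^{n+1} with 1 ≤ n ≤ m−1, and x_k = 0 for k > N^m. Then Σ_{k=0}^∞ x_k² = 2 + (N−1)m, and for every 1 ≤ n ≤ m one has Σ_{j=0}^{N^n} x_j = (√N + 1)·N^{n/2} − (√N − 1). -/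
/-!
Sum block by block: on the block `N^n < k ≤ N^(n+1)` the sequence is constant `N^(-n/2)` and the
block has `(N - 1) N^n` terms, so it adds `(N - 1) √N^n` to the partial sum and exactly
`N - 1` to the partial sum of squares. Both formulas then follow by induction on `n`.
-/

open Finset

lemma sum_range_succ_eq_add_nsmul_of_eq_on_Ioc {M : Type*} [AddCommMonoid M] {f : ℕ → M}
    {a b : ℕ} {c : M} (hab : a ≤ b) (hf : ∀ k, a < k → k ≤ b → f k = c) :
    ∑ k ∈ range (b + 1), f k = ∑ k ∈ range (a + 1), f k + (b - a) • c := by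
  have hblock : ∑ k ∈ Ico (a + 1) (b + 1), f k = (b - a) • c := by
    rw [sum_congr rfl fun k hk => hf k (by simp at hk; omega) (by simp at hk; omega),
      sum_const, Nat.card_Ico, Nat.add_sub_add_right]
  rw [← sum_range_add_sum_Ico f (Nat.succ_le_succ hab), hblock]

lemma natCast_pow_succ_sub_pow {N : ℕ} (hN : 0 < N) (n : ℕ) :
    ((N ^ (n + 1) - N ^ n : ℕ) : ℝ) = ((N : ℝ) - 1) * (N : ℝ) ^ n := by
  rw [Nat.cast_sub (Nat.pow_le_pow_right hN (Nat.le_add_right n 1))]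
  push_cast
  ring

lemma sum_range_pow_add_one_lacunary {N m : ℕ} (hN : 0 < N) {x : ℕ → ℝ}
    (hx1 : ∀ k ≤ N, x k = 1)
    (hx2 : ∀ n : ℕ, 1 ≤ n → n ≤ m - 1 →
      ∀ k : ℕ, N ^ n < k → k ≤ N ^ (n + 1) → x k = (Real.sqrt N ^ n)⁻¹)
    {n : ℕ} (hn : 1 ≤ n) (hnm : n ≤ m) :
    ∑ j ∈ range (N ^ n + 1), x j = (Real.sqrt N + 1) * Real.sqrt N ^ n - (Real.sqrt N - 1) := by
  set s := Real.sqrt N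
  have hs : s ^ 2 = N := Real.sq_sqrt N.cast_nonneg
  induction n, hn using Nat.le_induction with
  | base =>
    rw [sum_congr rfl fun j hj => hx1 j (by simp at hj; omega)]
    simp only [sum_const, card_range, pow_one, nsmul_eq_mul, mul_one]
    push_cast
    linear_combination -hs
  | succ n hn ih =>
    have hNn : (N : ℝ) ^ n = s ^ n * s ^ n := by rw [← mul_pow, ← sq, hs]
    rw [sum_range_succ_eq_add_nsmul_of_eq_on_Ioc (Nat.pow_le_pow_right hN (Nat.le_add_right n 1))
      (hx2 n hn (by omega)), ih (by omega), nsmul_eq_mul, natCast_pow_succ_sub_pow hN, hNn,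
      mul_assoc, mul_self_mul_inv]
    linear_combination -s ^ n * hs

lemma sum_range_pow_add_one_sq_lacunary {N m : ℕ} (hN : 0 < N) {x : ℕ → ℝ}
    (hx1 : ∀ k ≤ N, x k = 1)
    (hx2 : ∀ n : ℕ, 1 ≤ n → n ≤ m - 1 →
      ∀ k : ℕ, N ^ n < k → k ≤ N ^ (n + 1) → x k = (Real.sqrt N ^ n)⁻¹)
    {n : ℕ} (hn : 1 ≤ n) (hnm : n ≤ m) :
    ∑ j ∈ range (N ^ n + 1), x j ^ 2 = (N + 1) + ((n : ℝ) - 1) * ((N : ℝ) - 1) := by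
  induction n, hn using Nat.le_induction with
  | base =>
    rw [sum_congr rfl fun j hj => by rw [hx1 j (by simp at hj; omega)]]
    simp
  | succ n hn ih =>
    have hblock : ∀ k, N ^ n < k → k ≤ N ^ (n + 1) → x k ^ 2 = ((N : ℝ) ^ n)⁻¹ := by
      intro k hk₁ hk₂
      rw [hx2 n hn (by omega) k hk₁ hk₂, inv_pow, ← pow_mul, mul_comm, pow_mul,
        Real.sq_sqrt N.cast_nonneg]
    have hNn : (N : ℝ) ^ n ≠ 0 := pow_ne_zero _ (by exact_mod_cast hN.ne')
    rw [sum_range_succ_eq_add_nsmul_of_eq_on_Ioc (Nat.pow_le_pow_right hN (Nat.le_add_right n 1)) hblock,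
      ih (by omega), nsmul_eq_mul, natCast_pow_succ_sub_pow hN, mul_assoc,
      mul_inv_cancel₀ hNn]
    push_cast
    ring

/-- For integers `m ≥ 1`, `N ≥ 2`, the lacunary test sequence `x` with `x_k = 1`
for `0 ≤ k ≤ N`, `x_k = N^{−n/2}` for `N^n < k ≤ N^{n+1}` (`1 ≤ n ≤ m−1`) and
`x_k = 0` for `k > N^m` satisfies `∑ x_k² = 2 + (N−1)m` and, for `1 ≤ n ≤ m`,
`∑_{j=0}^{N^n} x_j = (√N + 1)·N^{n/2} − (√N − 1)`. -/
theorem lacunary_test_sequence (N m : ℕ) (hN : 2 ≤ N) (hm : 1 ≤ m)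
    (x : ℕ → ℝ)
    (hx1 : ∀ k ≤ N, x k = 1)
    (hx2 : ∀ n : ℕ, 1 ≤ n → n ≤ m - 1 →
      ∀ k : ℕ, N ^ n < k → k ≤ N ^ (n + 1) → x k = (Real.sqrt N ^ n)⁻¹)
    (hx3 : ∀ k : ℕ, N ^ m < k → x k = 0) :
    (∑' k : ℕ, (x k) ^ 2 = 2 + ((N : ℝ) - 1) * m) ∧
    ∀ n : ℕ, 1 ≤ n → n ≤ m →
      ∑ j ∈ Finset.range (N ^ n + 1), x j =
        (Real.sqrt N + 1) * Real.sqrt N ^ n - (Real.sqrt N - 1) := by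
  have hN₀ : 0 < N := by omega
  refine ⟨?_, fun n hn hnm => sum_range_pow_add_one_lacunary hN₀ hx1 hx2 hn hnm⟩
  have hfinite : ∀ k ∉ range (N ^ m + 1), x k ^ 2 = 0 := fun k hk => by
    rw [hx3 k (by simpa [Nat.lt_succ_iff] using hk), sq, mul_zero]
  rw [tsum_eq_sum hfinite, sum_range_pow_add_one_sq_lacunary hN₀ hx1 hx2 hm le_rfl]
  ring
end

section
/- Fix reals s ≥ 1/4 and ε > 0, and set α := 2/(4+ε−√((4+ε)ε)) and β := s²/(α((4+ε)s−1)). Define K_n := Γ(β)Γ(n+β−α)/(Γ(n+β+1)Γ(β−α+1)) for n ≥ 1, and let x = (x_n)_{n≥0} be given by x₀ = 1 and x_n = s(n+s)K_n for n ≥ 1. Assume β > α. Then the sequence y := A_s x, with y_n = (1/(n+s))Σ_{j=0}^{n} x_j + Σ_{j=n+1}^∞ x_j/(j+s), satisfies y_n = (4+ε)·s·Γ(n+β−α+1)Γ(β)/((n+s)Γ(n+β)Γ(β−α+1)) for every n ≥ 0; in particular y₀ = 4+ε and y_n = (4+ε)·((n+β−α)(n+β)/(n+s)²)·x_n for n ≥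 1. -/
/-!
With `G u = Γ(u) / Γ(u + α)` one has `G u - G (u + 1) = α Γ(u) / Γ(u + α + 1)`, so the terms
`x_j / (j + s) = s K_j` telescope. Log-convexity of `Γ` (Wendel's inequality) gives `G u → 0`,
hence the tail `∑_{j > n} x_j / (j + s)` equals `s Γ(β) G(n + 1 + β - α) / (α Γ(β - α + 1))`.
The partial sums `∑_{j ≤ n} x_j` have a closed form checked by induction: the base case is the
definition of `β`, and the inductive step is exactly the relation `(4 + ε) α (1 - α) = 1`
satisfied by `α`. Adding the two pieces gives `y_n`.
-/

open Real Filter Topology Finset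

theorem alpha_mem_Ioo_and_mul_one_sub {ε α : ℝ} (hε : 0 ≤ ε)
    (hα : α = 2 / (4 + ε - √((4 + ε) * ε))) :
    0 < α ∧ α < 1 ∧ (4 + ε) * (α * (1 - α)) = 1 := by
  set r := √((4 + ε) * ε)
  have hr : r ^ 2 = (4 + ε) * ε := sq_sqrt (by positivity)
  have hd : 0 < 4 + ε - r := by nlinarith [sqrt_nonneg ((4 + ε) * ε)]
  have hα₀ : 0 < α := by rw [hα]; positivity
  have hT : (4 + ε) * (α * (1 - α)) = 1 := by
    rw [hα]; field_simp; linear_combination -hr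
  refine ⟨hα₀, ?_, hT⟩
  nlinarith [mul_pos hα₀ (by linarith : (0 : ℝ) < 4 + ε)]

theorem mul_Gamma_le_Gamma_add_mul_rpow {y a : ℝ} (hy : 0 < y) (ha₀ : 0 < a) (ha₁ : a < 1) :
    y * Gamma y ≤ Gamma (y + a) * (y + a) ^ (1 - a) := by
  have hya : 0 < y + a := by linarith
  have hΓ : 0 < Gamma (y + a) := Gamma_pos_of_pos hya
  -- log-convexity at `y + 1 = a * (y + a) + (1 - a) * (y + a + 1)`
  have hconv := Gamma_mul_add_mul_le_rpow_Gamma_mul_rpow_Gamma hya (by linarith : 0 < y + a + 1)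
    ha₀ (by linarith : 0 < 1 - a) (by ring)
  rw [show a * (y + a) + (1 - a) * (y + a + 1) = y + 1 by ring, Gamma_add_one hy.ne',
    Gamma_add_one hya.ne', mul_comm (y + a), mul_rpow hΓ.le hya.le, ← mul_assoc,
    ← rpow_add hΓ, add_sub_cancel, rpow_one] at hconv
  linarith

theorem tendsto_Gamma_div_Gamma_add_atTop {a : ℝ} (ha₀ : 0 < a) (ha₁ : a < 1) :
    Tendsto (fun y => Gamma y / Gamma (y + a)) atTop (𝓝 0) := by
  have hlim : Tendsto (fun y => 2 * (y + a) ^ (-a)) atTop (𝓝 0) := by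
    simpa using ((tendsto_rpow_neg_atTop ha₀).comp
      (tendsto_atTop_add_const_right _ a tendsto_id)).const_mul 2
  refine tendsto_of_tendsto_of_tendsto_of_le_of_le' tendsto_const_nhds hlim ?_ ?_
  · filter_upwards [eventually_gt_atTop 0] with y hy
    exact div_nonneg (Gamma_pos_of_pos hy).le (Gamma_pos_of_pos (by linarith)).le
  · -- `Γ y / Γ (y + a) ≤ (y + a) ^ (1 - a) / y ≤ 2 (y + a) ^ (-a)` once `a ≤ y`
    filter_upwards [eventually_ge_atTop a] with y hy
    have hy0 : 0 < y := by linarith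
    have hya : 0 < y + a := by linarith
    have hΓ : 0 < Gamma (y + a) := Gamma_pos_of_pos hya
    have hW := mul_Gamma_le_Gamma_add_mul_rpow hy0 ha₀ ha₁
    rw [div_le_iff₀ hΓ]
    have hr : (y + a) ^ (1 - a) = (y + a) * (y + a) ^ (-a) := by
      rw [sub_eq_add_neg, rpow_add hya, rpow_one]
    have hpos : 0 < (y + a) ^ (-a) := rpow_pos_of_pos hya _
    rw [hr] at hW
    nlinarith [Gamma_pos_of_pos hy0, mul_pos hΓ hpos]

theorem Gamma_div_Gamma_add_sub_succ {u a : ℝ} (hu : u ≠ 0) (hua : 0 < u + a) :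
    Gamma u / Gamma (u + a) - Gamma (u + 1) / Gamma (u + 1 + a) =
      a * Gamma u / Gamma (u + a + 1) := by
  have hΓ := (Gamma_pos_of_pos hua).ne'
  rw [add_right_comm, Gamma_add_one hu, Gamma_add_one hua.ne']
  field_simp
  ring

theorem hasSum_Gamma_div_Gamma_add_add_one {u a : ℝ} (hu : 0 < u) (ha₀ : 0 < a) (ha₁ : a < 1) :
    HasSum (fun j : ℕ => Gamma (u + j) / Gamma (u + j + a + 1))
      (Gamma u / (a * Gamma (u + a))) := by
  set g : ℕ → ℝ := fun j => Gamma (u + j) / Gamma (u + j + a)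
  have hu' : ∀ j : ℕ, 0 < u + j := fun j => by positivity
  have hstep : ∀ j : ℕ, g j - g (j + 1) = a * (Gamma (u + j) / Gamma (u + j + a + 1)) := by
    intro j
    simp only [g, Nat.cast_succ, ← add_assoc, mul_div_assoc']
    exact Gamma_div_Gamma_add_sub_succ (hu' j).ne' (by linarith [hu' j])
  have hg : Tendsto g atTop (𝓝 0) :=
    (tendsto_Gamma_div_Gamma_add_atTop ha₀ ha₁).comp
      (tendsto_atTop_add_const_left _ u tendsto_natCast_atTop_atTop)
  have htel : HasSum (fun j => g j - g (j + 1)) (g 0) := by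
    rw [hasSum_iff_tendsto_nat_of_nonneg]
    · simp_rw [sum_range_sub']
      simpa using (tendsto_const_nhds (x := g 0)).sub hg
    · intro j
      rw [hstep]
      exact mul_nonneg ha₀.le (div_nonneg (Gamma_pos_of_pos (hu' j)).le
        (Gamma_pos_of_pos (by linarith [hu' j])).le)
  simp only [hstep, g, Nat.cast_zero, add_zero] at htel
  rw [div_mul_eq_div_div_swap]
  simpa only [mul_div_cancel_left₀ _ ha₀.ne'] using htel.div_const a

noncomputable def eigenSeq (s α β : ℝ) (n : ℕ) : ℝ :=
  if n = 0 then 1 else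
    s * (n + s) * (Gamma β * Gamma (n + β - α) / (Gamma (n + β + 1) * Gamma (β - α + 1)))

section eigenSeq

variable {s α β : ℝ}

theorem hasSum_eigenSeq_tail (hs : 0 ≤ s) (hα₀ : 0 < α) (hα₁ : α < 1) (hαβ : α < β) (n : ℕ) :
    HasSum (fun j : ℕ => eigenSeq s α β (n + 1 + j) / ((n : ℝ) + 1 + j + s))
      (s * Gamma β / Gamma (β - α + 1) * Gamma (n + β - α + 1) / (α * Gamma (n + β + 1))) := by
  have hu : (0 : ℝ) < n + β - α + 1 := by linarith [(n.cast_nonneg : (0 : ℝ) ≤ n)]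
  have hterm : ∀ j : ℕ, eigenSeq s α β (n + 1 + j) / ((n : ℝ) + 1 + j + s) =
      s * Gamma β / Gamma (β - α + 1) *
        (Gamma (n + β - α + 1 + j) / Gamma (n + β - α + 1 + j + α + 1)) := by
    intro j
    have hpos : (0 : ℝ) < n + 1 + j + s := by positivity
    rw [eigenSeq, if_neg (by omega)]
    push_cast
    rw [show (n : ℝ) + β - α + 1 + j + α + 1 = n + 1 + j + β + 1 by ring,
      show (n : ℝ) + β - α + 1 + j = n + 1 + j + β - α by ring]
    field_simp
  have hlim := (hasSum_Gamma_div_Gamma_add_add_one hu hα₀ hα₁).mul_left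
    (s * Gamma β / Gamma (β - α + 1))
  rw [show (n : ℝ) + β - α + 1 + α = n + β + 1 by ring, ← mul_div_assoc] at hlim
  simpa only [hterm] using hlim

theorem sum_range_eigenSeq {T : ℝ} (hT : T * (α * (1 - α)) = 1)
    (hβ : s ^ 2 = β * (α * (T * s - 1))) (hα₀ : 0 < α) (hαβ : α < β) (n : ℕ) :
    ∑ j ∈ range (n + 1), eigenSeq s α β j =
      s * Gamma β / Gamma (β - α + 1) * Gamma (n + β - α + 1) / Gamma (n + β) *
        (T - (n + s) / (α * (n + β))) := by
  have hβ₀ : 0 < β := hα₀.trans hαβ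
  have hΓβ : Gamma β ≠ 0 := (Gamma_pos_of_pos hβ₀).ne'
  have hΓβα : Gamma (β - α + 1) ≠ 0 := (Gamma_pos_of_pos (by linarith)).ne'
  induction n with
  | zero =>
    simp only [zero_add, sum_range_one, eigenSeq, if_pos, CharP.cast_eq_zero]
    field_simp
    linear_combination hβ
  | succ n ih =>
    have hnβ : (0 : ℝ) < n + β := by positivity
    have hnβα : (0 : ℝ) < n + β - α + 1 := by linarith [(n.cast_nonneg : (0 : ℝ) ≤ n)]
    have hΓnβ : Gamma (n + β) ≠ 0 := (Gamma_pos_of_pos hnβ).ne'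
    have hA : Gamma ((n : ℝ) + 1 + β - α + 1) = (n + β - α + 1) * Gamma (n + β - α + 1) := by
      rw [← Gamma_add_one hnβα.ne']; ring_nf
    have hB : Gamma ((n : ℝ) + 1 + β) = (n + β) * Gamma (n + β) := by
      rw [add_right_comm, Gamma_add_one hnβ.ne']
    have hC : Gamma ((n : ℝ) + 1 + β + 1) = (n + 1 + β) * ((n + β) * Gamma (n + β)) := by
      rw [← hB, ← Gamma_add_one (by positivity)]
    rw [sum_range_succ, ih, eigenSeq, if_neg (by omega)]
    push_cast
    rw [hA, hB, hC, show (n : ℝ) + 1 + β - α = n + β - α + 1 by ring]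
    field_simp
    linear_combination (-(s * (1 + n + β))) * hT

theorem As_apply_eigenSeq {T : ℝ} (hT : T * (α * (1 - α)) = 1)
    (hβ : s ^ 2 = β * (α * (T * s - 1))) (hs : 0 < s) (hα₀ : 0 < α) (hα₁ : α < 1) (hαβ : α < β)
    (n : ℕ) :
    1 / (n + s) * ∑ j ∈ range (n + 1), eigenSeq s α β j +
        ∑' j : ℕ, eigenSeq s α β (n + 1 + j) / ((n : ℝ) + 1 + j + s) =
      T * s * Gamma (n + β - α + 1) * Gamma β / ((n + s) * Gamma (n + β) * Gamma (β - α + 1)) := by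
  have hnβ : (0 : ℝ) < n + β := by linarith [(n.cast_nonneg : (0 : ℝ) ≤ n)]
  have hns : (0 : ℝ) < n + s := by positivity
  have := (Gamma_pos_of_pos hnβ).ne'
  have := (Gamma_pos_of_pos (by linarith : 0 < β - α + 1)).ne'
  rw [sum_range_eigenSeq hT hβ hα₀ hαβ, (hasSum_eigenSeq_tail hs.le hα₀ hα₁ hαβ n).tsum_eq,
    Gamma_add_one hnβ.ne']
  field_simp
  ring

end eigenSeq

/-- With `s ≥ 1/4`, `ε > 0`, `α = 2/(4+ε−√((4+ε)ε))`, `β = s²/(α((4+ε)s−1))`,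
`K_n = Γ(β)Γ(n+β−α)/(Γ(n+β+1)Γ(β−α+1))`, `x₀ = 1`, `x_n = s(n+s)K_n`, and
assuming `β > α`, the sequence `y = A_s x` given by
`y_n = (1/(n+s))∑_{j=0}^n x_j + ∑_{j=n+1}^∞ x_j/(j+s)` satisfies
`y_n = (4+ε)sΓ(n+β−α+1)Γ(β)/((n+s)Γ(n+β)Γ(β−α+1))` for all `n ≥ 0`; in
particular `y₀ = 4+ε` and `y_n = (4+ε)((n+β−α)(n+β)/(n+s)²)x_n` for `n ≥ 1`. -/
theorem As_eigen_sequence (s ε : ℝ) (hs : 1 / 4 ≤ s) (hε : 0 < ε)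
    (α β : ℝ)
    (hα : α = 2 / (4 + ε - Real.sqrt ((4 + ε) * ε)))
    (hβ : β = s ^ 2 / (α * ((4 + ε) * s - 1)))
    (hβα : α < β)
    (K : ℕ → ℝ)
    (hK : ∀ n : ℕ, 1 ≤ n → K n =
      Real.Gamma β * Real.Gamma (n + β - α) /
        (Real.Gamma (n + β + 1) * Real.Gamma (β - α + 1)))
    (x : ℕ → ℝ) (hx0 : x 0 = 1) (hxn : ∀ n : ℕ, 1 ≤ n → x n = s * (n + s) * K n)
    (y : ℕ → ℝ)
    (hy : ∀ n : ℕ, y n = (1 / (n + s)) * ∑ j ∈ Finset.range (n + 1), x j +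
      ∑' j : ℕ, x (n + 1 + j) / ((n : ℝ) + 1 + j + s)) :
    (∀ n : ℕ, y n = (4 + ε) * s * Real.Gamma (n + β - α + 1) * Real.Gamma β /
        ((n + s) * Real.Gamma (n + β) * Real.Gamma (β - α + 1))) ∧
    y 0 = 4 + ε ∧
    ∀ n : ℕ, 1 ≤ n →
      y n = (4 + ε) * ((n + β - α) * (n + β) / (n + s) ^ 2) * x n := by
  obtain ⟨hα₀, hα₁, hT⟩ := alpha_mem_Ioo_and_mul_one_sub hε.le hα
  have hs₀ : 0 < s := by linarith
  have hβ₀ : 0 < β := hα₀.trans hβα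
  have hβ' : s ^ 2 = β * (α * ((4 + ε) * s - 1)) := by
    have : 0 < (4 + ε) * s - 1 := by nlinarith
    rw [hβ, div_mul_cancel₀ _ (by positivity)]
  have hx : x = eigenSeq s α β := funext fun n => by
    rcases n.eq_zero_or_pos with rfl | hn
    · simp [eigenSeq, hx0]
    · rw [eigenSeq, if_neg hn.ne', hxn n hn, hK n hn]
  subst hx
  have hΓβ : Gamma β ≠ 0 := (Gamma_pos_of_pos hβ₀).ne'
  have hΓβα : Gamma (β - α + 1) ≠ 0 := (Gamma_pos_of_pos (by linarith)).ne'
  have hy' : ∀ n : ℕ, y n = (4 + ε) * s * Gamma (n + β - α + 1) * Gamma β /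
      ((n + s) * Gamma (n + β) * Gamma (β - α + 1)) := fun n =>
    (hy n).trans (As_apply_eigenSeq hT hβ' hs₀ hα₀ hα₁ hβα n)
  refine ⟨hy', ?_, fun n hn => ?_⟩
  · rw [hy' 0, Nat.cast_zero, zero_add, zero_add]
    field_simp
  · have hnβ : (0 : ℝ) < n + β := by positivity
    have hns : (0 : ℝ) < n + s := by positivity
    have := (Gamma_pos_of_pos hnβ).ne'
    rw [hy' n, eigenSeq, if_neg (by omega), Gamma_add_one (by linarith), Gamma_add_one hnβ.ne']
    field_simp
end

section
/- Let s ≥ 1 be real, 1 < p < ∞, and q := p/(p−1). For an integer m ≥ 0 let x_m be the sequence with entries (n+s)^{−1/p} for 0 ≤ n ≤ m and 0 for n > m. Then ‖A_s x_m‖_p^p ≥ (pq)^p·Σ_{n=0}^m (1/(n+s))·(1 − (1/p)(s/(n+s))^{1/q} − (1/q)((m+s+1)/(n+s))^{−1/p})^p, and moreover there is a constant c (independent of m) such that (pq)^p·Σ_{n=0}^m (1/(n+s))·((s/(n+s))^{1/q} + (p/q)((m+s+1)/(n+s))^{−1/p}) ≤ c for all m ≥ 0. -/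
/-!
For `n ≤ m` the entry `(A_s x_m)_n` splits into `(n+s)⁻¹ ∑_{j ≤ n} (j+s)^{-1/p}` and
`∑_{n < j ≤ m} (j+s)^{-1/p-1}`. Each block is compared with the integral of a power function
through the tangent-line inequalities of `t ↦ t^r` (concave for `0 ≤ r ≤ 1`, convex for
`r ≤ 0`), which telescope. Bernoulli's inequality `(1 + 1/a)^{1/p} ≤ 1 + 1/(pa)` together
with `pq = p + q` then turns the two integral bounds into the main term `pq (n+s)^{-1/p}` minus
the two error terms, and the same telescoping sums bound the error terms by `1/s + q + p²/q`,
uniformly in `m`.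
-/

open Real Finset

namespace Real

lemma one_add_mul_sub_one_le_rpow {r u : ℝ} (hr : r ≤ 0) (hu : 0 < u) :
    1 + r * (u - 1) ≤ u ^ r :=
  calc 1 + r * (u - 1) ≤ r * log u + 1 := by
        linarith [mul_le_mul_of_nonpos_left (log_le_sub_one_of_pos hu) hr]
    _ ≤ exp (r * log u) := add_one_le_exp _
    _ = u ^ r := by rw [rpow_def_of_pos hu, mul_comm]

private lemma rpow_mul_one_add_mul_div_sub_one {r x y : ℝ} (hx : 0 < x) :
    x ^ r * (1 + r * (y / x - 1)) = x ^ r + r * x ^ (r - 1) * (y - x) := by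
  rw [rpow_sub_one hx.ne']
  field_simp

private lemma rpow_eq_rpow_mul_rpow_div {r x y : ℝ} (hx : 0 < x) (hy : 0 ≤ y) :
    y ^ r = x ^ r * (y / x) ^ r := by
  rw [div_rpow hy hx.le, mul_div_cancel₀ _ (rpow_pos_of_pos hx r).ne']

lemma rpow_le_add_mul_rpow_sub_one_mul_sub {r x y : ℝ} (hr₀ : 0 ≤ r) (hr₁ : r ≤ 1)
    (hx : 0 < x) (hy : 0 ≤ y) : y ^ r ≤ x ^ r + r * x ^ (r - 1) * (y - x) :=
  calc y ^ r = x ^ r * (1 + (y / x - 1)) ^ r := by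
        rw [add_sub_cancel, rpow_eq_rpow_mul_rpow_div hx hy]
    _ ≤ x ^ r * (1 + r * (y / x - 1)) := by
        gcongr
        exact rpow_one_add_le_one_add_mul_self (by linarith [div_nonneg hy hx.le]) hr₀ hr₁
    _ = x ^ r + r * x ^ (r - 1) * (y - x) := rpow_mul_one_add_mul_div_sub_one hx

lemma add_mul_rpow_sub_one_mul_sub_le_rpow {r x y : ℝ} (hr : r ≤ 0) (hx : 0 < x)
    (hy : 0 < y) : x ^ r + r * x ^ (r - 1) * (y - x) ≤ y ^ r :=
  calc x ^ r + r * x ^ (r - 1) * (y - x) = x ^ r * (1 + r * (y / x - 1)) :=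
        (rpow_mul_one_add_mul_div_sub_one hx).symm
    _ ≤ x ^ r * (y / x) ^ r := by
        gcongr
        exact one_add_mul_sub_one_le_rpow hr (div_pos hy hx)
    _ = y ^ r := (rpow_eq_rpow_mul_rpow_div hx hy.le).symm
end Real

namespace Real.HolderConjugate

variable {p q : ℝ}

lemma one_div_le_one (h : p.HolderConjugate q) : 1 / p ≤ 1 := (div_le_one h.pos).2 h.lt.le

lemma one_div_sub_one (h : p.HolderConjugate q) : 1 / p - 1 = -(1 / q) := by
  simpa only [one_div] using h.inv_sub_one

lemma one_div_add_one_div_eq_one (h : p.HolderConjugate q) : 1 / p + 1 / q = 1 := by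
  rw [h.one_div_add_one_div, div_one]

lemma mul_mul_rpow_neg_one_div_le (h : p.HolderConjugate q) {a : ℝ} (ha : 0 < a) :
    p * q * a ^ (-(1 / p)) ≤ q * (a + 1) ^ (1 / q) / a + p * (a + 1) ^ (-(1 / p)) := by
  have hp := h.pos
  have hq := h.symm.pos
  have ha₁ : 0 < a + 1 := by positivity
  have hbern : (1 + 1 / a) ^ (1 / p) ≤ 1 + 1 / p * (1 / a) :=
    rpow_one_add_le_one_add_mul_self (by linarith [one_div_pos.2 ha]) h.one_div_nonneg
      h.one_div_le_one
  have hsplit : a ^ (-(1 / p)) = (a + 1) ^ (-(1 / p)) * (1 + 1 / a) ^ (1 / p) := by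
    rw [one_add_div ha.ne', div_rpow ha₁.le ha.le, rpow_neg ha.le, rpow_neg ha₁.le]
    field_simp
  have hq' : (a + 1) ^ (1 / q) = (a + 1) * (a + 1) ^ (-(1 / p)) := by
    rw [show 1 / q = 1 + -(1 / p) by linarith [h.symm.one_div_sub_one], rpow_add ha₁, rpow_one]
  calc p * q * a ^ (-(1 / p)) ≤ p * q * ((a + 1) ^ (-(1 / p)) * (1 + 1 / p * (1 / a))) := by
        rw [hsplit]; gcongr
    _ = q * (a + 1) ^ (1 / q) / a + p * (a + 1) ^ (-(1 / p)) := by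
        rw [hq']
        field_simp
        linear_combination a * h.mul_eq_add

end Real.HolderConjugate

section Telescoping

variable {r s : ℝ} {a b : ℕ}

lemma le_sum_Ico_rpow_sub_one (hr₀ : 0 < r) (hr₁ : r ≤ 1) (hab : a ≤ b) (hs : 0 < a + s) :
    ((b + s) ^ r - (a + s) ^ r) / r ≤ ∑ k ∈ Ico a b, ((k : ℝ) + s) ^ (r - 1) := by
  rw [sub_div, ← sum_Ico_sub (fun k : ℕ ↦ ((k : ℝ) + s) ^ r / r) hab]
  refine sum_le_sum fun k hk ↦ ?_
  have hx : 0 < (k : ℝ) + s := by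
    have : (a : ℝ) ≤ k := by exact_mod_cast (mem_Ico.1 hk).1
    linarith
  have step := rpow_le_add_mul_rpow_sub_one_mul_sub hr₀.le hr₁ hx (y := k + 1 + s) (by linarith)
  rw [show (k : ℝ) + 1 + s - (k + s) = 1 by ring] at step
  rw [← sub_div, div_le_iff₀ hr₀]
  push_cast
  linarith

lemma sum_Ico_rpow_sub_one_le (hr₀ : 0 < r) (hr₁ : r ≤ 1) (hab : a ≤ b) (hs : 1 ≤ a + s) :
    ∑ k ∈ Ico a b, ((k : ℝ) + s) ^ (r - 1) ≤ ((b - 1 + s) ^ r - (a - 1 + s) ^ r) / r := by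
  rw [sub_div, ← sum_Ico_sub (fun k : ℕ ↦ ((k : ℝ) - 1 + s) ^ r / r) hab]
  refine sum_le_sum fun k hk ↦ ?_
  have hx : 1 ≤ (k : ℝ) + s := by
    have : (a : ℝ) ≤ k := by exact_mod_cast (mem_Ico.1 hk).1
    linarith
  have step := rpow_le_add_mul_rpow_sub_one_mul_sub hr₀.le hr₁ (x := k + s) (y := k - 1 + s)
    (by linarith) (by linarith)
  rw [show (k : ℝ) - 1 + s - (k + s) = -1 by ring] at step
  rw [← sub_div, le_div_iff₀ hr₀]
  push_cast
  rw [add_sub_cancel_right]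
  linarith

lemma le_sum_Ico_rpow_neg_sub_one (hr : 0 < r) (hab : a ≤ b) (hs : 0 < a + s) :
    ((a + s) ^ (-r) - (b + s) ^ (-r)) / r ≤ ∑ k ∈ Ico a b, ((k : ℝ) + s) ^ (-r - 1) := by
  rw [show ((a + s) ^ (-r) - (b + s) ^ (-r)) / r = -(b + s) ^ (-r) / r - -(a + s) ^ (-r) / r by
    ring, ← sum_Ico_sub (fun k : ℕ ↦ -((k : ℝ) + s) ^ (-r) / r) hab]
  refine sum_le_sum fun k hk ↦ ?_
  have hx : 0 < (k : ℝ) + s := by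
    have : (a : ℝ) ≤ k := by exact_mod_cast (mem_Ico.1 hk).1
    linarith
  have step := add_mul_rpow_sub_one_mul_sub_le_rpow (neg_nonpos.2 hr.le) hx (y := k + 1 + s)
    (by linarith)
  rw [show (k : ℝ) + 1 + s - (k + s) = 1 by ring] at step
  rw [← sub_div, div_le_iff₀ hr]
  push_cast
  linarith

lemma sum_Ico_rpow_neg_sub_one_le (hr : 0 < r) (hab : a ≤ b) (hs : 1 < a + s) :
    ∑ k ∈ Ico a b, ((k : ℝ) + s) ^ (-r - 1) ≤
      ((a - 1 + s) ^ (-r) - (b - 1 + s) ^ (-r)) / r := by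
  rw [show ((a - 1 + s) ^ (-r) - (b - 1 + s) ^ (-r)) / r
      = -(b - 1 + s) ^ (-r) / r - -(a - 1 + s) ^ (-r) / r by ring,
    ← sum_Ico_sub (fun k : ℕ ↦ -((k : ℝ) - 1 + s) ^ (-r) / r) hab]
  refine sum_le_sum fun k hk ↦ ?_
  have hx : 1 < (k : ℝ) + s := by
    have : (a : ℝ) ≤ k := by exact_mod_cast (mem_Ico.1 hk).1
    linarith
  have step := add_mul_rpow_sub_one_mul_sub_le_rpow (neg_nonpos.2 hr.le) (x := k + s)
    (y := k - 1 + s) (by linarith) (by linarith)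
  rw [show (k : ℝ) - 1 + s - (k + s) = -1 by ring] at step
  rw [← sub_div, le_div_iff₀ hr]
  push_cast
  rw [add_sub_cancel_right]
  linarith

lemma sum_range_rpow_sub_one_le (hr₀ : 0 < r) (hr₁ : r ≤ 1) (hs : 1 ≤ s) (n : ℕ) :
    ∑ k ∈ range (n + 1), ((k : ℝ) + s) ^ (r - 1) ≤ (n + s) ^ r / r := by
  have := sum_Ico_rpow_sub_one_le hr₀ hr₁ (Nat.zero_le (n + 1)) (by simpa using hs)
  rw [← range_eq_Ico, Nat.cast_succ, add_sub_cancel_right] at this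
  refine this.trans (div_le_div_of_nonneg_right ?_ hr₀.le)
  have : 0 ≤ ((0 : ℕ) - 1 + s) ^ r := rpow_nonneg (by simpa using hs) r
  linarith

lemma sum_range_rpow_neg_sub_one_le (hr : 0 < r) (hs : 0 < s) (n : ℕ) :
    ∑ k ∈ range (n + 1), ((k : ℝ) + s) ^ (-r - 1) ≤ s ^ (-r - 1) + s ^ (-r) / r := by
  have := sum_Ico_rpow_neg_sub_one_le hr (by omega : 1 ≤ n + 1) (by simpa using hs)
  rw [Nat.cast_one, sub_self, zero_add] at this
  rw [sum_range_eq_add_Ico _ n.succ_pos, Nat.cast_zero, zero_add]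
  refine add_le_add le_rfl (this.trans (div_le_div_of_nonneg_right ?_ hr.le))
  have : 0 ≤ (((n + 1 : ℕ) : ℝ) - 1 + s) ^ (-r) := rpow_nonneg (by push_cast; linarith) _
  linarith

end Telescoping

noncomputable def lMatrixApply (s : ℝ) (x : ℕ → ℝ) (n : ℕ) : ℝ :=
  ∑' j : ℕ, x j / ((max n j : ℝ) + s)

section LMatrix

variable {s p : ℝ} {x : ℕ → ℝ} {t : Finset ℕ}

lemma lMatrixApply_eq_sum (hx : ∀ j ∉ t, x j = 0) (n : ℕ) :
    lMatrixApply s x n = ∑ j ∈ t, x j / ((max n j : ℝ) + s) :=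
  tsum_eq_sum fun j hj ↦ by rw [hx j hj, zero_div]

lemma abs_lMatrixApply_le (hs : 0 < s) (hx : ∀ j ∉ t, x j = 0) (n : ℕ) :
    |lMatrixApply s x n| ≤ (∑ j ∈ t, |x j|) / (n + s) := by
  rw [lMatrixApply_eq_sum hx, sum_div]
  refine (abs_sum_le_sum_abs _ _).trans (sum_le_sum fun j _ ↦ ?_)
  have hn : (n : ℝ) ≤ max (n : ℝ) j := le_max_left _ _
  rw [abs_div, abs_of_pos (by positivity : (0 : ℝ) < max (n : ℝ) j + s)]
  gcongr

lemma summable_abs_lMatrixApply_rpow (hs : 0 < s) (hp : 1 < p) (hx : ∀ j ∉ t, x j = 0) :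
    Summable fun n ↦ |lMatrixApply s x n| ^ p := by
  refine .of_nonneg_of_le (fun n ↦ by positivity) (fun n ↦ ?_)
    (((summable_one_div_nat_add_rpow s p).2 hp).mul_left ((∑ j ∈ t, |x j|) ^ p))
  have hn : 0 < (n : ℝ) + s := by positivity
  rw [abs_of_pos hn, mul_one_div, ← div_rpow (by positivity) hn.le]
  gcongr
  exact abs_lMatrixApply_le hs hx n

end LMatrix

noncomputable def testSeq (s p : ℝ) (m n : ℕ) : ℝ :=
  if n ≤ m then ((n : ℝ) + s) ^ (-(1 / p)) else 0

section TestSeq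

variable {s p q : ℝ}

lemma testSeq_eq_zero {m j : ℕ} (hj : j ∉ range (m + 1)) : testSeq s p m j = 0 :=
  if_neg (by simpa [Nat.lt_succ_iff] using hj)

lemma lMatrixApply_testSeq (hs : 0 < s) {m n : ℕ} (hnm : n ≤ m) :
    lMatrixApply s (testSeq s p m) n =
      (∑ j ∈ range (n + 1), ((j : ℝ) + s) ^ (-(1 / p))) / (n + s) +
        ∑ j ∈ Ico (n + 1) (m + 1), ((j : ℝ) + s) ^ (-(1 / p) - 1) := by
  rw [lMatrixApply_eq_sum (fun j ↦ testSeq_eq_zero),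
    ← sum_range_add_sum_Ico _ (by omega : n + 1 ≤ m + 1), sum_div]
  congr 1 <;> refine sum_congr rfl fun j hj ↦ ?_
  · have hjn : j ≤ n := mem_range_succ_iff.1 hj
    rw [testSeq, if_pos (hjn.trans hnm), max_eq_left (by exact_mod_cast hjn)]
  · obtain ⟨hnj, hjm⟩ := mem_Ico.1 hj
    rw [testSeq, if_pos (Nat.lt_succ_iff.1 hjm),
      max_eq_right (by exact_mod_cast (Nat.le_of_succ_le hnj)), rpow_sub_one (by positivity)]

lemma sub_sub_le_lMatrixApply_testSeq (hpq : p.HolderConjugate q) (hs : 0 < s) {m n : ℕ}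
    (hnm : n ≤ m) :
    p * q * (n + s) ^ (-(1 / p)) - q * s ^ (1 / q) / (n + s) - p * (m + s + 1) ^ (-(1 / p)) ≤
      lMatrixApply s (testSeq s p m) n := by
  have hn : 0 < (n : ℝ) + s := by positivity
  have head : q * ((n + s + 1) ^ (1 / q) - s ^ (1 / q)) ≤
      ∑ j ∈ range (n + 1), ((j : ℝ) + s) ^ (-(1 / p)) := by
    have := le_sum_Ico_rpow_sub_one hpq.symm.one_div_pos hpq.symm.one_div_le_one
      (Nat.zero_le (n + 1)) (by simpa using hs)
    rwa [hpq.symm.one_div_sub_one, ← range_eq_Ico, div_div_eq_mul_div, div_one, Nat.cast_succ,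
      Nat.cast_zero, zero_add, add_right_comm, mul_comm] at this
  have tail : p * ((n + s + 1) ^ (-(1 / p)) - (m + s + 1) ^ (-(1 / p))) ≤
      ∑ j ∈ Ico (n + 1) (m + 1), ((j : ℝ) + s) ^ (-(1 / p) - 1) := by
    have := le_sum_Ico_rpow_neg_sub_one hpq.one_div_pos (by omega : n + 1 ≤ m + 1)
      (by positivity)
    rwa [div_div_eq_mul_div, div_one, Nat.cast_succ, Nat.cast_succ, add_right_comm,
      add_right_comm (m : ℝ), mul_comm] at this
  have key := hpq.mul_mul_rpow_neg_one_div_le hn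
  rw [lMatrixApply_testSeq hs hnm]
  have := div_le_div_of_nonneg_right head hn.le
  rw [mul_sub, sub_div] at this
  linarith

lemma le_abs_lMatrixApply_testSeq_rpow (hpq : p.HolderConjugate q) (hs : 0 < s) {m n : ℕ}
    (hnm : n ≤ m) :
    (p * q) ^ p * ((1 / ((n : ℝ) + s)) *
      (1 - (1 / p) * (s / ((n : ℝ) + s)) ^ (1 / q) -
        (1 / q) * (((m : ℝ) + s + 1) / ((n : ℝ) + s)) ^ (-(1 / p))) ^ p) ≤
      |lMatrixApply s (testSeq s p m) n| ^ p := by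
  have hp := hpq.pos
  have hq := hpq.symm.pos
  set a : ℝ := n + s
  set M : ℝ := m + s + 1
  have ha : 0 < a := by positivity
  have hsa : s ≤ a := le_add_of_nonneg_left n.cast_nonneg
  have haM : a ≤ M := by
    have : (n : ℝ) ≤ m := by exact_mod_cast hnm
    linarith
  set B := 1 - 1 / p * (s / a) ^ (1 / q) - 1 / q * (M / a) ^ (-(1 / p))
  have hB : 0 ≤ B := by
    have hX : (s / a) ^ (1 / q) ≤ 1 :=
      rpow_le_one (by positivity) ((div_le_one ha).2 hsa) hpq.symm.one_div_nonneg
    have hY : (M / a) ^ (-(1 / p)) ≤ 1 :=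
      rpow_le_one_of_one_le_of_nonpos ((one_le_div ha).2 haM) (neg_nonpos.2 hpq.one_div_nonneg)
    have hX' := mul_le_of_le_one_right hpq.one_div_nonneg hX
    have hY' := mul_le_of_le_one_right hpq.symm.one_div_nonneg hY
    have := hpq.one_div_add_one_div_eq_one
    simp only [B]
    linarith
  have hid : p * q * a ^ (-(1 / p)) * B =
      p * q * a ^ (-(1 / p)) - q * s ^ (1 / q) / a - p * M ^ (-(1 / p)) := by
    simp only [B]
    rw [div_rpow hs.le ha.le, div_rpow (by positivity) ha.le, ← hpq.symm.one_div_sub_one,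
      rpow_sub_one ha.ne']
    field_simp
  calc (p * q) ^ p * (1 / a * B ^ p) = (p * q * a ^ (-(1 / p)) * B) ^ p := by
        rw [mul_rpow (by positivity) hB, mul_rpow (x := p * q) (by positivity) (by positivity),
          ← rpow_mul ha.le, neg_mul, one_div_mul_cancel hp.ne', rpow_neg_one, one_div, mul_assoc]
    _ ≤ |lMatrixApply s (testSeq s p m) n| ^ p :=
        rpow_le_rpow (by positivity)
          (hid ▸ (sub_sub_le_lMatrixApply_testSeq hpq hs hnm).trans (le_abs_self _)) hp.le

lemma sum_range_error_le (hpq : p.HolderConjugate q) (hs : 1 ≤ s) (m : ℕ) :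
    ∑ n ∈ range (m + 1), (1 / ((n : ℝ) + s)) *
        ((s / ((n : ℝ) + s)) ^ (1 / q) +
          (p / q) * (((m : ℝ) + s + 1) / ((n : ℝ) + s)) ^ (-(1 / p))) ≤
      1 / s + q + p ^ 2 / q := by
  have hp := hpq.pos
  have hq := hpq.symm.pos
  have hs₀ : 0 < s := by linarith
  set M : ℝ := m + s + 1
  have hM : 0 < M := by positivity
  have hterm : ∀ n : ℕ, (1 / ((n : ℝ) + s)) *
      ((s / ((n : ℝ) + s)) ^ (1 / q) + (p / q) * (M / ((n : ℝ) + s)) ^ (-(1 / p))) =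
        s ^ (1 / q) * ((n : ℝ) + s) ^ (-(1 / q) - 1) +
          p / q * M ^ (-(1 / p)) * ((n : ℝ) + s) ^ (1 / p - 1) := by
    intro n
    have hn : 0 < (n : ℝ) + s := by positivity
    rw [div_rpow hs₀.le hn.le, div_rpow hM.le hn.le, rpow_sub_one hn.ne', rpow_sub_one hn.ne',
      rpow_neg hn.le, rpow_neg hn.le]
    field_simp
  rw [sum_congr rfl fun n _ ↦ hterm n, sum_add_distrib, ← mul_sum, ← mul_sum]
  have hhead := sum_range_rpow_neg_sub_one_le hpq.symm.one_div_pos hs₀ m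
  have htail := sum_range_rpow_sub_one_le hpq.one_div_pos hpq.one_div_le_one hs m
  have hmM : (m : ℝ) + s ≤ M := by linarith
  calc _ ≤ s ^ (1 / q) * (s ^ (-(1 / q) - 1) + s ^ (-(1 / q)) / (1 / q)) +
        p / q * M ^ (-(1 / p)) * (M ^ (1 / p) / (1 / p)) := by
        gcongr
        exact htail.trans (by gcongr)
    _ = 1 / s + q + p ^ 2 / q := by
        rw [rpow_sub_one hs₀.ne', rpow_neg hs₀.le, rpow_neg hM.le]
        field_simp

end TestSeq

/-- For `s ≥ 1`, `1 < p < ∞`, `q = p/(p−1)` and the truncated test sequences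
`x_m = ((n+s)^{−1/p})_{n ≤ m}`:
`‖A_s x_m‖_p^p ≥ (pq)^p ∑_{n=0}^m (1/(n+s))(1 − (1/p)(s/(n+s))^{1/q} − (1/q)((m+s+1)/(n+s))^{−1/p})^p`,
and the error terms
`(pq)^p ∑_{n=0}^m (1/(n+s))((s/(n+s))^{1/q} + (p/q)((m+s+1)/(n+s))^{−1/p})`
are bounded by a constant independent of `m`. -/
theorem As_pnorm_lower_test (s p q : ℝ) (hs : 1 ≤ s) (hp : 1 < p)
    (hq : q = p / (p - 1))
    (X : ℕ → ℕ → ℝ)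
    (hX : ∀ m n : ℕ, X m n = if n ≤ m then ((n : ℝ) + s) ^ (-(1 / p)) else 0) :
    (∀ m : ℕ,
      ∑' n : ℕ, |∑' j : ℕ, X m j / ((max n j : ℝ) + s)| ^ p ≥
        (p * q) ^ p * ∑ n ∈ Finset.range (m + 1), (1 / ((n : ℝ) + s)) *
          (1 - (1 / p) * (s / ((n : ℝ) + s)) ^ (1 / q) -
            (1 / q) * (((m : ℝ) + s + 1) / ((n : ℝ) + s)) ^ (-(1 / p))) ^ p) ∧
    ∃ c : ℝ, ∀ m : ℕ,
      (p * q) ^ p * ∑ n ∈ Finset.range (m + 1), (1 / ((n : ℝ) + s)) *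
          ((s / ((n : ℝ) + s)) ^ (1 / q) +
            (p / q) * (((m : ℝ) + s + 1) / ((n : ℝ) + s)) ^ (-(1 / p))) ≤ c := by
  have hpq : p.HolderConjugate q := (holderConjugate_iff_eq_conjExponent hp).2 hq
  have hs₀ : 0 < s := by linarith
  obtain rfl : X = testSeq s p := funext₂ hX
  refine ⟨fun m ↦ ?_, (p * q) ^ p * (1 / s + q + p ^ 2 / q), fun m ↦ ?_⟩
  · calc (p * q) ^ p * _ = ∑ n ∈ range (m + 1), (p * q) ^ p * _ := mul_sum _ _ _
      _ ≤ ∑ n ∈ range (m + 1), |lMatrixApply s (testSeq s p m) n| ^ p :=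
          sum_le_sum fun n hn ↦
            le_abs_lMatrixApply_testSeq_rpow hpq hs₀ (mem_range_succ_iff.1 hn)
      _ ≤ _ := (summable_abs_lMatrixApply_rpow hs₀ hp fun _ ↦ testSeq_eq_zero).sum_le_tsum _
          fun n _ ↦ by positivity
  · exact mul_le_mul_of_nonneg_left (sum_range_error_le hpq hs m)
      (rpow_nonneg (mul_pos hpq.pos hpq.symm.pos).le _)
end
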